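/- arXiv:2105.09872 — 11 statements merged into one kernel-verified Lean document; each statement's English description precedes it below -/
import Mathlib

section
/- Let p, q ≥ 1, let Θ, Θ' be real p×p matrices and Ψ, Ψ' be real q×q matrices. Then Θ⊕Ψ = Θ'⊕Ψ' if and only if there exists a constant c ∈ ℝ such that Θ' = Θ + c·I_p and Ψ' = Ψ − c·I_q. -/
open Matrix
open scoped Kronecker

namespace EiGLasso

/-- The Kronecker sum `Θ ⊕ Ψ = Θ ⊗ I_q + I_p ⊗ Ψ`. -/
def kronSum {p q : ℕ} (A : Matrix (Fin p) (Fin p) ℝ) (B : Matrix (Fin q) (Fin q) ℝ) :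
    Matrix (Fin p × Fin q) (Fin p × Fin q) ℝ :=
  A ⊗ₖ (1 : Matrix (Fin q) (Fin q) ℝ) + (1 : Matrix (Fin p) (Fin p) ℝ) ⊗ₖ B

/-- The `pq × p` selection matrix `I_p ⊗ e_{q,i}`, where `e_{q,i}` is the `i`-th one-hot
vector in `ℝ^q`.  Row `(j', i')` (i.e. row `(j'-1)q + i'`), column `j`. -/
def selTheta (p q : ℕ) (i : Fin q) : Matrix (Fin p × Fin q) (Fin p) ℝ :=
  Matrix.of fun x j => if x = (j, i) then (1 : ℝ) else 0

/-- The `pq × q` selection matrix `e_{p,j} ⊗ I_q`. -/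
def selPsi (p q : ℕ) (j : Fin p) : Matrix (Fin p × Fin q) (Fin q) ℝ :=
  Matrix.of fun x i => if x = (j, i) then (1 : ℝ) else 0

/-- `P_Θ = ∑_{i=1}^q I_p ⊗ e_{q,i} ⊗ I_p ⊗ e_{q,i}`, a `p²q² × p²` matrix. -/
def Ptheta (p q : ℕ) : Matrix ((Fin p × Fin q) × (Fin p × Fin q)) (Fin p × Fin p) ℝ :=
  ∑ i : Fin q, (selTheta p q i) ⊗ₖ (selTheta p q i)

/-- `P_Ψ = ∑_{j=1}^p e_{p,j} ⊗ I_q ⊗ e_{p,j} ⊗ I_q`, a `p²q² × q²` matrix. -/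
def Ppsi (p q : ℕ) : Matrix ((Fin p × Fin q) × (Fin p × Fin q)) (Fin q × Fin q) ℝ :=
  ∑ j : Fin p, (selPsi p q j) ⊗ₖ (selPsi p q j)

/-- Column-stacking vectorization: `vec(A)` at index `(j, i)` (i.e. `(j-1)m + i`) is `A i j`. -/
def vec {m n : Type*} (A : Matrix m n ℝ) : n × m → ℝ := fun x => A x.2 x.1


/-- `Θ ⊕ Ψ = Θ' ⊕ Ψ'` iff there is `c ∈ ℝ` with `Θ' = Θ + c·I_p` and
`Ψ' = Ψ − c·I_q`. -/
theorem kronSum_eq_iff (p q : ℕ) (hp : 1 ≤ p) (hq : 1 ≤ q)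
    (Θ Θ' : Matrix (Fin p) (Fin p) ℝ) (Ψ Ψ' : Matrix (Fin q) (Fin q) ℝ) :
    kronSum Θ Ψ = kronSum Θ' Ψ' ↔
      ∃ c : ℝ, Θ' = Θ + c • (1 : Matrix (Fin p) (Fin p) ℝ) ∧
        Ψ' = Ψ - c • (1 : Matrix (Fin q) (Fin q) ℝ) := by
  constructor
  · intro h
    have i0 : Fin p := ⟨0, hp⟩
    have k0 : Fin q := ⟨0, hq⟩
    have key : ∀ (i j : Fin p) (k l : Fin q),
        Θ i j * (if k = l then (1:ℝ) else 0) + (if i = j then (1:ℝ) else 0) * Ψ k l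
        = Θ' i j * (if k = l then (1:ℝ) else 0) + (if i = j then (1:ℝ) else 0) * Ψ' k l := by
      intro i j k l
      have := congrFun (congrFun h (i, k)) (j, l)
      simpa [kronSum, Matrix.one_apply] using this
    refine ⟨Θ' i0 i0 - Θ i0 i0, ?_, ?_⟩
    · ext i j
      by_cases hij : i = j
      · subst hij
        have h1 := key i i k0 k0
        have h2 := key i0 i0 k0 k0
        simp only [if_true, mul_one, one_mul] at h1 h2
        simp [Matrix.one_apply]
        linarith
      · have h1 := key i j k0 k0
        simp [hij] at h1
        simp [Matrix.one_apply, hij, h1]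
    · ext k l
      by_cases hkl : k = l
      · subst hkl
        have h1 := key i0 i0 k k
        simp only [if_true, mul_one, one_mul] at h1
        simp [Matrix.one_apply]
        linarith
      · have h1 := key i0 i0 k l
        simp [hkl] at h1
        simp [Matrix.one_apply, hkl, h1]
  · rintro ⟨c, rfl, rfl⟩
    ext ⟨i, k⟩ ⟨j, l⟩
    by_cases hij : i = j <;> by_cases hkl : k = l <;>
      simp [kronSum, Matrix.one_apply, hij, hkl] <;> ring

end EiGLasso
end

section
/- Let p, q ≥ 1, let Θ, Θ' be real symmetric p×p matrices and Ψ, Ψ' real symmetric q×q matrices with Θ⊕Ψ = Θ'⊕Ψ'. Suppose tr(Θ⊕Ψ) ≠ 0, tr(Θ) ≠ 0, tr(Θ') ≠ 0, and the trace ratios agree: tr(Ψ)/tr(Θ) = tr(Ψ')/tr(Θ'). Then Θ = Θ' and Ψ = Ψ'. In particular, a Kronecker sum Ω = Θ⊕Ψ together with the trace ratio ρ = tr(Ψ)/tr(Θ) determines the pair (Θ,Ψ) uniquely. -/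
open Matrix
open scoped Kronecker

namespace EiGLasso

/-- A Kronecker sum `Ω = Θ ⊕ Ψ` together with the trace ratio
`ρ = tr(Ψ)/tr(Θ)` determines the pair `(Θ, Ψ)` uniquely (assuming `tr(Ω) ≠ 0`). -/
theorem kronSum_trace_ratio_unique (p q : ℕ) (hp : 1 ≤ p) (hq : 1 ≤ q)
    (Θ Θ' : Matrix (Fin p) (Fin p) ℝ) (Ψ Ψ' : Matrix (Fin q) (Fin q) ℝ)
    (hΘ : Θ.IsSymm) (hΘ' : Θ'.IsSymm) (hΨ : Ψ.IsSymm) (hΨ' : Ψ'.IsSymm)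
    (heq : kronSum Θ Ψ = kronSum Θ' Ψ')
    (htrΩ : (kronSum Θ Ψ).trace ≠ 0)
    (htΘ : Θ.trace ≠ 0) (htΘ' : Θ'.trace ≠ 0)
    (hratio : Ψ.trace / Θ.trace = Ψ'.trace / Θ'.trace) :
    Θ = Θ' ∧ Ψ = Ψ' := by
  have key : ∀ (a c : Fin p) (b d : Fin q),
      Θ a c * (if b = d then (1:ℝ) else 0) + (if a = c then (1:ℝ) else 0) * Ψ b d =
      Θ' a c * (if b = d then (1:ℝ) else 0) + (if a = c then (1:ℝ) else 0) * Ψ' b d := by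
    intro a c b d
    have := congrFun (congrFun heq (a, b)) (c, d)
    simpa [kronSum, Matrix.kroneckerMap_apply, Matrix.one_apply] using this
  obtain ⟨j0⟩ : Nonempty (Fin q) := ⟨⟨0, hq⟩⟩
  obtain ⟨i0⟩ : Nonempty (Fin p) := ⟨⟨0, hp⟩⟩
  set c : ℝ := Θ i0 i0 - Θ' i0 i0 with hc
  -- diagonal relation for Θ
  have hdiagΘ : ∀ a : Fin p, Θ a a - Θ' a a = c := by
    intro a
    have h1 := key a a j0 j0
    have h2 := key i0 i0 j0 j0
    simp at h1 h2
    rw [hc]; linarith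
  have hdiagΨ : ∀ b : Fin q, Ψ' b b - Ψ b b = c := by
    intro b
    have h1 := key i0 i0 b b
    simp at h1
    rw [hc]; linarith
  have hoffΘ : ∀ a b : Fin p, a ≠ b → Θ a b = Θ' a b := by
    intro a b hab
    have h1 := key a b j0 j0
    simp [hab] at h1
    exact h1
  have hoffΨ : ∀ a b : Fin q, a ≠ b → Ψ a b = Ψ' a b := by
    intro a b hab
    have h1 := key i0 i0 a b
    simp [hab] at h1
    exact h1
  -- traces
  have htrΘ : Θ.trace - Θ'.trace = (p : ℝ) * c := by
    simp only [Matrix.trace, Matrix.diag]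
    rw [← Finset.sum_sub_distrib]
    simp only [hdiagΘ]
    simp [mul_comm]
  have htrΨ : Ψ'.trace - Ψ.trace = (q : ℝ) * c := by
    simp only [Matrix.trace, Matrix.diag]
    rw [← Finset.sum_sub_distrib]
    simp only [hdiagΨ]
    simp [mul_comm]
  have htrΩ' : Θ.trace * q + p * Ψ.trace ≠ 0 := by
    have : (kronSum Θ Ψ).trace = Θ.trace * q + p * Ψ.trace := by
      simp [kronSum, Matrix.trace_kronecker]
    rwa [this] at htrΩ
  have hcross : Ψ.trace * Θ'.trace = Ψ'.trace * Θ.trace :=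
    (div_eq_div_iff htΘ htΘ').mp hratio
  have hc0 : c = 0 := by
    have hexp : c * (Θ.trace * q + p * Ψ.trace) = 0 := by linear_combination (-Ψ.trace) * htrΘ + (-Θ.trace) * htrΨ - hcross
    rcases mul_eq_zero.mp hexp with h | h
    · exact h
    · exact absurd h htrΩ'
  have hΘeq : Θ = Θ' := by
    ext a b
    by_cases hab : a = b
    · subst hab
      have := hdiagΘ a
      rw [hc0] at this; linarith
    · exact hoffΘ a b hab
  have hΨeq : Ψ = Ψ' := by
    ext a b
    by_cases hab : a = b
    · subst hab
      have := hdiagΨ a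
      rw [hc0] at this; linarith
    · exact hoffΨ a b hab
  exact ⟨hΘeq, hΨeq⟩

end EiGLasso
end

section
/- Let p, q ≥ 1, let Θ be a real p×p matrix and Ψ a real q×q matrix with tr(Θ) ≠ 0, set ρ = tr(Ψ)/tr(Θ), assume q + ρp ≠ 0, and let Ω = Θ⊕Ψ. Then the diagonals of Θ and Ψ are recovered from Ω by: diag(Θ) = (1/q)[ diag( Σ_{i=1}^q (I_p⊗e_{q,i})^T Ω (I_p⊗e_{q,i}) ) − (ρ/(q+ρp))·tr(Ω)·I_p ] and diag(Ψ) = (1/p)[ diag( Σ_{j=1}^p (e_{p,j}⊗I_q)^T Ω (e_{p,j}⊗I_q) ) − (1/(q+ρp))·tr(Ω)·I_q ]; equivalently, [Θ]_{jj} = (1/q)( Σ_{i=(j-1)q+1}^{jq} [Ω]_{ii} − (ρ/(q+ρp))·tr(Ω) ) for each j. -/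
open Matrix
open scoped Kronecker

/-! The diagonal entry of `Ω = Θ ⊕ Ψ` at `(j, i)` is `Θ j j + Ψ i i`, so the `j`-th diagonal block of
`Ω` has trace `q Θ j j + tr Ψ` and `tr Ω = q tr Θ + p tr Ψ = (q + ρ p) tr Θ`. Hence `tr Θ` and
`tr Ψ = ρ tr Θ` are read off `tr Ω`, and subtracting them from the block traces leaves the diagonals. -/

namespace EiGLasso

variable {p q : ℕ}

lemma kronSum_apply_diag (Θ : Matrix (Fin p) (Fin p) ℝ) (Ψ : Matrix (Fin q) (Fin q) ℝ)
    (j : Fin p) (i : Fin q) : kronSum Θ Ψ (j, i) (j, i) = Θ j j + Ψ i i := by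
  simp [kronSum, one_apply]

lemma trace_kronSum (Θ : Matrix (Fin p) (Fin p) ℝ) (Ψ : Matrix (Fin q) (Fin q) ℝ) :
    (kronSum Θ Ψ).trace = q * Θ.trace + p * Ψ.trace := by
  simp only [kronSum, trace_add, trace_kronecker, trace_one, Fintype.card_fin]
  ring

lemma sum_kronSum_apply_diag_left (Θ : Matrix (Fin p) (Fin p) ℝ) (Ψ : Matrix (Fin q) (Fin q) ℝ)
    (j : Fin p) : ∑ i : Fin q, kronSum Θ Ψ (j, i) (j, i) = q * Θ j j + Ψ.trace := by
  simp [kronSum_apply_diag, Finset.sum_add_distrib, trace]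

lemma sum_kronSum_apply_diag_right (Θ : Matrix (Fin p) (Fin p) ℝ) (Ψ : Matrix (Fin q) (Fin q) ℝ)
    (i : Fin q) : ∑ j : Fin p, kronSum Θ Ψ (j, i) (j, i) = p * Ψ i i + Θ.trace := by
  simp [kronSum_apply_diag, Finset.sum_add_distrib, trace, add_comm]

lemma selTheta_transpose_mul_mul_apply (Ω : Matrix (Fin p × Fin q) (Fin p × Fin q) ℝ)
    (i : Fin q) (j j' : Fin p) :
    ((selTheta p q i)ᵀ * Ω * selTheta p q i) j j' = Ω (j, i) (j', i) := by
  simp [mul_apply, selTheta]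

lemma selPsi_transpose_mul_mul_apply (Ω : Matrix (Fin p × Fin q) (Fin p × Fin q) ℝ)
    (j : Fin p) (i i' : Fin q) :
    ((selPsi p q j)ᵀ * Ω * selPsi p q j) i i' = Ω (j, i) (j, i') := by
  simp [mul_apply, selPsi]

lemma one_div_mul_trace_kronSum (Θ : Matrix (Fin p) (Fin p) ℝ) (Ψ : Matrix (Fin q) (Fin q) ℝ)
    (htΘ : Θ.trace ≠ 0) (hden : (q : ℝ) + (Ψ.trace / Θ.trace) * p ≠ 0) :
    1 / ((q : ℝ) + (Ψ.trace / Θ.trace) * p) * (kronSum Θ Ψ).trace = Θ.trace := by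
  rw [trace_kronSum, one_div, inv_mul_eq_iff_eq_mul₀ hden]
  field_simp

/-- Identification of the diagonals of `Θ` and `Ψ` from `Ω = Θ ⊕ Ψ`
and the trace ratio `ρ = tr(Ψ)/tr(Θ)`. -/
theorem diag_identification (p q : ℕ) (hp : 1 ≤ p) (hq : 1 ≤ q)
    (Θ : Matrix (Fin p) (Fin p) ℝ) (Ψ : Matrix (Fin q) (Fin q) ℝ)
    (htΘ : Θ.trace ≠ 0)
    (hden : (q : ℝ) + (Ψ.trace / Θ.trace) * p ≠ 0) :
    (∀ j : Fin p,
      Θ j j = (1 / q) *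
        ((∑ i : Fin q, (selTheta p q i)ᵀ * kronSum Θ Ψ * selTheta p q i) j j
          - (Ψ.trace / Θ.trace) / ((q : ℝ) + (Ψ.trace / Θ.trace) * p)
            * (kronSum Θ Ψ).trace)) ∧
    (∀ i : Fin q,
      Ψ i i = (1 / p) *
        ((∑ j : Fin p, (selPsi p q j)ᵀ * kronSum Θ Ψ * selPsi p q j) i i
          - 1 / ((q : ℝ) + (Ψ.trace / Θ.trace) * p)
            * (kronSum Θ Ψ).trace)) ∧
    (∀ j : Fin p,
      Θ j j = (1 / q) * ((∑ i : Fin q, kronSum Θ Ψ (j, i) (j, i))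
          - (Ψ.trace / Θ.trace) / ((q : ℝ) + (Ψ.trace / Θ.trace) * p)
            * (kronSum Θ Ψ).trace)) := by
  have hq0 : (q : ℝ) ≠ 0 := by positivity
  have hp0 : (p : ℝ) ≠ 0 := by positivity
  have htrΘ := one_div_mul_trace_kronSum Θ Ψ htΘ hden
  have htrΨ : (Ψ.trace / Θ.trace) / ((q : ℝ) + (Ψ.trace / Θ.trace) * p)
      * (kronSum Θ Ψ).trace = Ψ.trace := by
    rw [div_eq_mul_one_div _ ((q : ℝ) + _), mul_assoc, htrΘ, div_mul_cancel₀ _ htΘ]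
  have hΘ : ∀ j : Fin p, Θ j j = (1 / q) * ((∑ i : Fin q, kronSum Θ Ψ (j, i) (j, i))
      - (Ψ.trace / Θ.trace) / ((q : ℝ) + (Ψ.trace / Θ.trace) * p)
        * (kronSum Θ Ψ).trace) := by
    intro j
    rw [sum_kronSum_apply_diag_left, htrΨ]
    field_simp
    ring
  refine ⟨fun j => ?_, fun i => ?_, hΘ⟩
  · simpa only [Matrix.sum_apply, selTheta_transpose_mul_mul_apply] using hΘ j
  · rw [Matrix.sum_apply]
    simp only [selPsi_transpose_mul_mul_apply]
    rw [sum_kronSum_apply_diag_right, htrΘ]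
    field_simp
    ring

end EiGLasso
end

section
/- Let p, q ≥ 1, let W be a real symmetric pq×pq matrix, and let P_Θ = Σ_{r=1}^q I_p⊗e_{q,r}⊗I_p⊗e_{q,r}. Then for all real symmetric p×p matrices A and B: tr( W·(A⊗I_q)·W·(B⊗I_q) ) = vec(A)^T · P_Θ^T (W⊗W) P_Θ · vec(B). Analogously, with P_Ψ = Σ_{j=1}^p e_{p,j}⊗I_q⊗e_{p,j}⊗I_q, for all real symmetric q×q matrices C, D: tr( W·(I_p⊗C)·W·(I_p⊗D) ) = vec(C)^T · P_Ψ^T (W⊗W) P_Ψ · vec(D), and tr( W·(A⊗I_q)·W·(I_p⊗D) ) = vec(A)^T · P_Θ^T (W⊗W) P_Ψ · vec(D). -/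
open Matrix
open scoped Kronecker

namespace EiGLasso

lemma vec_dot {m n : Type*} [Fintype m] [Fintype n] (X Y : Matrix m n ℝ) :
    vec X ⬝ᵥ vec Y = (Xᵀ * Y).trace := by
  simp [dotProduct, vec, Matrix.trace, Matrix.mul_apply, Matrix.diag,
    Fintype.sum_prod_type, mul_comm]

lemma kron_mulVec_vec {m n m' n' : Type*} [Fintype m] [Fintype n] [Fintype m'] [Fintype n']
    (V : Matrix m n ℝ) (V' : Matrix m' n' ℝ) (B : Matrix n' n ℝ) :
    (V ⊗ₖ V').mulVec (vec B) = vec (V' * B * Vᵀ) := by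
  ext ⟨c, r⟩
  simp [Matrix.mulVec, dotProduct, vec, Matrix.mul_apply, Fintype.sum_prod_type,
    Finset.mul_sum, Finset.sum_mul]
  refine Finset.sum_congr rfl fun x _ => Finset.sum_congr rfl fun y _ => ?_
  ring

lemma key {ι n m : Type*} [Fintype ι] [Fintype n] [Fintype m]
    (W : Matrix ι ι ℝ) (hW : W.IsSymm) (A : Matrix n n ℝ) (hA : A.IsSymm)
    (B : Matrix m m ℝ) (S : Matrix ι n ℝ) (T : Matrix ι m ℝ) :
    (W * (S * A * Sᵀ) * W * (T * B * Tᵀ)).trace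
      = vec A ⬝ᵥ (((S ⊗ₖ S)ᵀ * (W ⊗ₖ W) * (T ⊗ₖ T)).mulVec (vec B)) := by
  have hM : (S ⊗ₖ S)ᵀ * (W ⊗ₖ W) * (T ⊗ₖ T) = (Sᵀ * W * T) ⊗ₖ (Sᵀ * W * T) := by
    rw [← kroneckerMap_transpose, ← mul_kronecker_mul, ← mul_kronecker_mul]
  rw [hM, kron_mulVec_vec, vec_dot]
  have hVt : Tᵀ * (W * S) = ((Sᵀ * W * T) : Matrix n m ℝ)ᵀ := by
    rw [Matrix.transpose_mul, Matrix.transpose_mul, Matrix.transpose_transpose, hW.eq]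
  have h1 : W * (S * A * Sᵀ) * W * (T * B * Tᵀ)
      = (W * S) * ((A * (Sᵀ * W * T) * B) * Tᵀ) := by
    simp only [Matrix.mul_assoc]
  rw [h1, Matrix.trace_mul_comm, hA.eq]
  congr 1
  simp only [Matrix.mul_assoc]
  rw [hVt, Matrix.mul_assoc Sᵀ W T]

lemma sum_mulVec' {a b κ : Type*} [Fintype b] [Fintype κ] (M : κ → Matrix a b ℝ) (v : b → ℝ) :
    (∑ i, M i).mulVec v = ∑ i, (M i).mulVec v :=
  map_sum (Matrix.mulVec.addMonoidHomLeft v) M Finset.univ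

lemma dot_sum' {a κ : Type*} [Fintype a] [Fintype κ] (u : a → ℝ) (f : κ → a → ℝ) :
    u ⬝ᵥ (∑ i, f i) = ∑ i, u ⬝ᵥ f i := by
  simp only [dotProduct, Finset.sum_apply, Finset.mul_sum]
  exact Finset.sum_comm

lemma key_sum {ι n m κ κ' : Type*} [Fintype ι] [Fintype n] [Fintype m] [Fintype κ] [Fintype κ']
    (W : Matrix ι ι ℝ) (hW : W.IsSymm) (A : Matrix n n ℝ) (hA : A.IsSymm)
    (B : Matrix m m ℝ) (S : κ → Matrix ι n ℝ) (T : κ' → Matrix ι m ℝ) :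
    (W * (∑ i, S i * A * (S i)ᵀ) * W * (∑ j, T j * B * (T j)ᵀ)).trace
      = vec A ⬝ᵥ (((∑ i, S i ⊗ₖ S i)ᵀ * (W ⊗ₖ W) * (∑ j, T j ⊗ₖ T j)).mulVec (vec B)) := by
  simp only [Matrix.mul_sum, Matrix.sum_mul, Matrix.transpose_sum, Matrix.trace_sum,
    sum_mulVec', dot_sum']
  exact Finset.sum_congr rfl fun j _ => Finset.sum_congr rfl fun i _ =>
    key W hW A hA B (S i) (T j)

lemma theta_decomp (p q : ℕ) (A : Matrix (Fin p) (Fin p) ℝ) :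
    A ⊗ₖ (1 : Matrix (Fin q) (Fin q) ℝ)
      = ∑ i : Fin q, selTheta p q i * A * (selTheta p q i)ᵀ := by
  ext ⟨a, b⟩ ⟨c, d⟩
  simp [selTheta, Matrix.sum_apply, Matrix.mul_apply, Matrix.transpose_apply,
    Matrix.one_apply, Prod.ext_iff, ite_and, Finset.sum_ite_eq, Finset.sum_ite_eq',
    mul_ite, ite_mul]

lemma psi_decomp (p q : ℕ) (C : Matrix (Fin q) (Fin q) ℝ) :
    (1 : Matrix (Fin p) (Fin p) ℝ) ⊗ₖ C
      = ∑ j : Fin p, selPsi p q j * C * (selPsi p q j)ᵀ := by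
  ext ⟨a, b⟩ ⟨c, d⟩
  simp [selPsi, Matrix.sum_apply, Matrix.mul_apply, Matrix.transpose_apply,
    Matrix.one_apply, Prod.ext_iff, ite_and, Finset.sum_ite_eq, Finset.sum_ite_eq',
    mul_ite, ite_mul]

/-- The Hessian blocks `P_Θᵀ(W⊗W)P_Θ`, `P_Ψᵀ(W⊗W)P_Ψ`, `P_Θᵀ(W⊗W)P_Ψ`
represent the quadratic forms `tr(W(A⊗I)W(B⊗I))`, `tr(W(I⊗C)W(I⊗D))`, `tr(W(A⊗I)W(I⊗D))`
on symmetric matrices via vectorization. -/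
theorem hessian_collapse (p q : ℕ) (hp : 1 ≤ p) (hq : 1 ≤ q)
    (W : Matrix (Fin p × Fin q) (Fin p × Fin q) ℝ) (hW : W.IsSymm) :
    (∀ A B : Matrix (Fin p) (Fin p) ℝ, A.IsSymm → B.IsSymm →
      (W * (A ⊗ₖ (1 : Matrix (Fin q) (Fin q) ℝ)) * W
        * (B ⊗ₖ (1 : Matrix (Fin q) (Fin q) ℝ))).trace
        = vec A ⬝ᵥ ((Ptheta p q)ᵀ * (W ⊗ₖ W) * Ptheta p q).mulVec (vec B)) ∧
    (∀ C D : Matrix (Fin q) (Fin q) ℝ, C.IsSymm → D.IsSymm →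
      (W * ((1 : Matrix (Fin p) (Fin p) ℝ) ⊗ₖ C) * W
        * ((1 : Matrix (Fin p) (Fin p) ℝ) ⊗ₖ D)).trace
        = vec C ⬝ᵥ ((Ppsi p q)ᵀ * (W ⊗ₖ W) * Ppsi p q).mulVec (vec D)) ∧
    (∀ (A : Matrix (Fin p) (Fin p) ℝ) (D : Matrix (Fin q) (Fin q) ℝ), A.IsSymm → D.IsSymm →
      (W * (A ⊗ₖ (1 : Matrix (Fin q) (Fin q) ℝ)) * W
        * ((1 : Matrix (Fin p) (Fin p) ℝ) ⊗ₖ D)).trace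
        = vec A ⬝ᵥ ((Ptheta p q)ᵀ * (W ⊗ₖ W) * Ppsi p q).mulVec (vec D)) := by
  refine ⟨fun A B hA hB => ?_, fun C D hC hD => ?_, fun A D hA hD => ?_⟩
  · rw [theta_decomp p q A, theta_decomp p q B, Ptheta]
    exact key_sum W hW A hA B _ _
  · rw [psi_decomp p q C, psi_decomp p q D, Ppsi]
    exact key_sum W hW C hC D _ _
  · rw [theta_decomp p q A, psi_decomp p q D, Ptheta, Ppsi]
    exact key_sum W hW A hA D _ _

end EiGLasso
end

section
/- Let Θ = Q_Θ Λ_Θ Q_Θ^T and Ψ = Q_Ψ Λ_Ψ Q_Ψ^T with Q_Θ (p×p) and Q_Ψ (q×q) orthogonal, Λ_Θ = diag(λ_{Θ,1},…,λ_{Θ,p}) and Λ_Ψ = diag(λ_{Ψ,1},…,λ_{Ψ,q}) diagonal, and suppose λ_{Θ,l} + λ_{Ψ,k} ≠ 0 for all l, k. Let W = (Θ⊕Ψ)^{-1}. Then Σ_{i=1}^q (I_p⊗e_{q,i})^T W (I_p⊗e_{q,i}) = Q_Θ ( Σ_{k=1}^q (Λ_Θ + λ_{Ψ,k} I_p)^{-1}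 ) Q_Θ^T, and symmetrically Σ_{j=1}^p (e_{p,j}⊗I_q)^T W (e_{p,j}⊗I_q) = Q_Ψ ( Σ_{l=1}^p (Λ_Ψ + λ_{Θ,l} I_q)^{-1} ) Q_Ψ^T. -/
/-
Write `U = Q_Θ ⊗ Q_Ψ`, an orthogonal matrix. Then `Θ ⊕ Ψ = U (Λ_Θ ⊕ Λ_Ψ) Uᵀ`, and `Λ_Θ ⊕ Λ_Ψ` is
diagonal with entries `λ_{Θ,l} + λ_{Ψ,k}`, so `W = U (Λ_Θ ⊕ Λ_Ψ)⁻¹ Uᵀ`. The `Θ`-collapse is the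
partial trace over the `Ψ` factor: it is unchanged by conjugating that factor with the orthogonal
`Q_Ψ`, it lets `Q_Θ` out on both sides, and on the diagonal matrix `(Λ_Θ ⊕ Λ_Ψ)⁻¹` it gives
`∑_k (Λ_Θ + λ_{Ψ,k} I)⁻¹`. The `Ψ`-collapse is the same statement after swapping the two
tensor factors, which turns `Θ ⊕ Ψ` into `Ψ ⊕ Θ`.
-/

open Matrix
open scoped Kronecker

namespace Matrix

variable {R k l m n : Type*} [CommSemiring R] [Fintype n]

/-- Partial trace over the second tensor factor, `∑_i (I ⊗ e_i)ᵀ M (I ⊗ e_i)`. -/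
def traceRight (M : Matrix (l × n) (m × n) R) : Matrix l m R :=
  of fun a b => ∑ i, M (a, i) (b, i)

@[simp]
theorem traceRight_apply (M : Matrix (l × n) (m × n) R) (a : l) (b : m) :
    traceRight M a b = ∑ i, M (a, i) (b, i) :=
  rfl

theorem traceRight_kronecker_one_mul [Fintype l] [DecidableEq n] (A : Matrix k l R)
    (M : Matrix (l × n) (m × n) R) :
    traceRight ((A ⊗ₖ (1 : Matrix n n R)) * M) = A * traceRight M := by
  ext a b
  simp only [traceRight_apply, mul_apply, kroneckerMap_apply, Fintype.sum_prod_type, one_apply,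
    mul_ite, mul_one, mul_zero, ite_mul, zero_mul, Finset.sum_ite_eq, Finset.mem_univ, if_true,
    Finset.mul_sum]
  rw [Finset.sum_comm]

theorem traceRight_mul_kronecker_one [Fintype m] [DecidableEq n] (M : Matrix (l × n) (m × n) R)
    (B : Matrix m k R) : traceRight (M * (B ⊗ₖ (1 : Matrix n n R))) = traceRight M * B := by
  ext a b
  simp only [traceRight_apply, mul_apply, kroneckerMap_apply, Fintype.sum_prod_type, one_apply,
    mul_ite, mul_one, mul_zero, Finset.sum_ite_eq', Finset.mem_univ, if_true, Finset.sum_mul]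
  rw [Finset.sum_comm]

theorem traceRight_one_kronecker_mul_comm [Fintype l] [Fintype m] [DecidableEq l] [DecidableEq m]
    (B : Matrix n n R) (M : Matrix (l × n) (m × n) R) :
    traceRight (((1 : Matrix l l R) ⊗ₖ B) * M) = traceRight (M * ((1 : Matrix m m R) ⊗ₖ B)) := by
  ext a b
  simp only [traceRight_apply, mul_apply, kroneckerMap_apply, Fintype.sum_prod_type, one_apply,
    ite_mul, one_mul, zero_mul, mul_ite, mul_zero, Finset.sum_ite_irrel, Finset.sum_const_zero,
    Finset.sum_ite_eq, Finset.sum_ite_eq', Finset.mem_univ, if_true]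
  rw [Finset.sum_comm]
  simp only [mul_comm]

theorem traceRight_kronecker_mul_mul_kronecker [Fintype l] [Fintype m] [DecidableEq l]
    [DecidableEq m] [DecidableEq n] {k' : Type*} (A : Matrix k l R) (M : Matrix (l × n) (m × n) R)
    (B : Matrix m k' R) {Q : Matrix n n R} (hQ : Qᵀ * Q = 1) :
    traceRight ((A ⊗ₖ Q) * M * (B ⊗ₖ Qᵀ)) = A * traceRight M * B := by
  have hAQ : A ⊗ₖ Q = (A ⊗ₖ (1 : Matrix n n R)) * ((1 : Matrix l l R) ⊗ₖ Q) := by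
    rw [← mul_kronecker_mul, Matrix.mul_one, Matrix.one_mul]
  have hBQ : B ⊗ₖ Qᵀ = ((1 : Matrix m m R) ⊗ₖ Qᵀ) * (B ⊗ₖ (1 : Matrix n n R)) := by
    rw [← mul_kronecker_mul, Matrix.mul_one, Matrix.one_mul]
  have hassoc : (A ⊗ₖ (1 : Matrix n n R)) * ((1 : Matrix l l R) ⊗ₖ Q) * M
        * (((1 : Matrix m m R) ⊗ₖ Qᵀ) * (B ⊗ₖ (1 : Matrix n n R)))
      = (A ⊗ₖ (1 : Matrix n n R)) * (((1 : Matrix l l R) ⊗ₖ Q) * (M * ((1 : Matrix m m R) ⊗ₖ Qᵀ))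
        * (B ⊗ₖ (1 : Matrix n n R))) := by
    simp only [Matrix.mul_assoc]
  rw [hAQ, hBQ, hassoc, traceRight_kronecker_one_mul, traceRight_mul_kronecker_one,
    traceRight_one_kronecker_mul_comm, Matrix.mul_assoc, ← mul_kronecker_mul, Matrix.mul_one, hQ,
    one_kronecker_one, Matrix.mul_one, Matrix.mul_assoc]

theorem traceRight_diagonal [DecidableEq m] [DecidableEq n] (c : m × n → R) :
    traceRight (diagonal c) = diagonal fun a => ∑ i, c (a, i) := by
  ext a b
  by_cases h : a = b <;> simp [h]

theorem inv_conj_of_mul_eq_one {K : Type*} [CommRing K] [DecidableEq n] {U V : Matrix n n K}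
    (h : U * V = 1) (M : Matrix n n K) : (U * M * V)⁻¹ = U * M⁻¹ * V := by
  rw [Matrix.mul_inv_rev, Matrix.mul_inv_rev, inv_eq_left_inv h, inv_eq_right_inv h,
    Matrix.mul_assoc]

theorem inv_diagonal_of_ne_zero {K : Type*} [Field K] [DecidableEq n] {v : n → K}
    (hv : ∀ i, v i ≠ 0) : (diagonal v)⁻¹ = diagonal v⁻¹ :=
  inv_eq_left_inv <| by
    rw [diagonal_mul_diagonal, ← diagonal_one]
    exact congrArg diagonal (funext fun i => inv_mul_cancel₀ (hv i))

theorem inv_diagonal_add_smul_one {K : Type*} [Field K] [DecidableEq n] {v : n → K} {t : K}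
    (h : ∀ i, v i + t ≠ 0) :
    (diagonal v + t • (1 : Matrix n n K))⁻¹ = diagonal fun i => (v i + t)⁻¹ := by
  rw [smul_one_eq_diagonal, diagonal_add, inv_diagonal_of_ne_zero h]
  rfl

end Matrix

namespace EiGLasso

section

variable {p q : ℕ}

theorem sum_selTheta_conj_eq_traceRight (W : Matrix (Fin p × Fin q) (Fin p × Fin q) ℝ) :
    ∑ i, (selTheta p q i)ᵀ * W * selTheta p q i = traceRight W := by
  ext a b
  simp [selTheta, mul_apply, Matrix.sum_apply]

theorem sum_selPsi_conj_eq_traceRight_swap (W : Matrix (Fin p × Fin q) (Fin p × Fin q) ℝ) :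
    ∑ j, (selPsi p q j)ᵀ * W * selPsi p q j = traceRight (W.submatrix Prod.swap Prod.swap) := by
  ext a b
  simp [selPsi, mul_apply, Matrix.sum_apply]

theorem kronSum_submatrix_swap (A : Matrix (Fin p) (Fin p) ℝ) (B : Matrix (Fin q) (Fin q) ℝ) :
    (kronSum A B).submatrix Prod.swap Prod.swap = kronSum B A := by
  ext ⟨i, j⟩ ⟨i', j'⟩
  simp [kronSum, add_comm, mul_comm]

theorem inv_kronSum_submatrix_swap (A : Matrix (Fin p) (Fin p) ℝ) (B : Matrix (Fin q) (Fin q) ℝ) :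
    (kronSum A B)⁻¹.submatrix Prod.swap Prod.swap = (kronSum B A)⁻¹ := by
  rw [← kronSum_submatrix_swap A B]
  exact (inv_submatrix_equiv _ (Equiv.prodComm _ _) (Equiv.prodComm _ _)).symm

theorem kronSum_diagonal (a : Fin p → ℝ) (b : Fin q → ℝ) :
    kronSum (diagonal a) (diagonal b) = diagonal fun x => a x.1 + b x.2 := by
  ext ⟨i, j⟩ ⟨i', j'⟩
  by_cases hi : i = i' <;> by_cases hj : j = j' <;> simp [kronSum, hi, hj]

theorem kronSum_conj {P : Matrix (Fin p) (Fin p) ℝ} {Q : Matrix (Fin q) (Fin q) ℝ}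
    (hP : P * Pᵀ = 1) (hQ : Q * Qᵀ = 1) (A : Matrix (Fin p) (Fin p) ℝ)
    (B : Matrix (Fin q) (Fin q) ℝ) :
    kronSum (P * A * Pᵀ) (Q * B * Qᵀ) = (P ⊗ₖ Q) * kronSum A B * (Pᵀ ⊗ₖ Qᵀ) := by
  simp only [kronSum, Matrix.mul_add, Matrix.add_mul, ← mul_kronecker_mul, Matrix.mul_one, hP, hQ]

theorem traceRight_inv_kronSum_eig {Qθ : Matrix (Fin p) (Fin p) ℝ} {Qψ : Matrix (Fin q) (Fin q) ℝ}
    (hQθ : Qθ * Qθᵀ = 1) (hQψ : Qψ * Qψᵀ = 1) {dθ : Fin p → ℝ} {dψ : Fin q → ℝ}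
    (hnz : ∀ l k, dθ l + dψ k ≠ 0) :
    traceRight (kronSum (Qθ * diagonal dθ * Qθᵀ) (Qψ * diagonal dψ * Qψᵀ))⁻¹
      = Qθ * (∑ k, (diagonal dθ + dψ k • (1 : Matrix (Fin p) (Fin p) ℝ))⁻¹) * Qθᵀ := by
  have hU : (Qθ ⊗ₖ Qψ) * (Qθᵀ ⊗ₖ Qψᵀ) = 1 := by
    rw [← mul_kronecker_mul, hQθ, hQψ, one_kronecker_one]
  rw [kronSum_conj hQθ hQψ, kronSum_diagonal, inv_conj_of_mul_eq_one hU,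
    inv_diagonal_of_ne_zero (v := fun x : Fin p × Fin q => dθ x.1 + dψ x.2) fun x => hnz x.1 x.2,
    traceRight_kronecker_mul_mul_kronecker _ _ _ (mul_eq_one_comm.mp hQψ), traceRight_diagonal]
  simp only [inv_diagonal_add_smul_one (hnz · _)]
  congr 2
  ext a b
  by_cases h : a = b <;> simp [Matrix.sum_apply, h]

end

theorem collapsed_inverse_eig_general (p q : ℕ)
    (Qθ : Matrix (Fin p) (Fin p) ℝ) (Qψ : Matrix (Fin q) (Fin q) ℝ)
    (hQθ : Qθ * Qθᵀ = 1)
    (hQψ : Qψ * Qψᵀ = 1)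
    (dθ : Fin p → ℝ) (dψ : Fin q → ℝ)
    (hnz : ∀ (l : Fin p) (k : Fin q), dθ l + dψ k ≠ 0) :
    (∑ i : Fin q, (selTheta p q i)ᵀ
        * (kronSum (Qθ * diagonal dθ * Qθᵀ) (Qψ * diagonal dψ * Qψᵀ))⁻¹ * selTheta p q i)
      = Qθ * (∑ k : Fin q, (diagonal dθ + dψ k • (1 : Matrix (Fin p) (Fin p) ℝ))⁻¹) * Qθᵀ ∧
    (∑ j : Fin p, (selPsi p q j)ᵀ
        * (kronSum (Qθ * diagonal dθ * Qθᵀ) (Qψ * diagonal dψ * Qψᵀ))⁻¹ * selPsi p q j)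
      = Qψ * (∑ l : Fin p, (diagonal dψ + dθ l • (1 : Matrix (Fin q) (Fin q) ℝ))⁻¹) * Qψᵀ := by
  constructor
  · rw [sum_selTheta_conj_eq_traceRight]
    exact traceRight_inv_kronSum_eig hQθ hQψ hnz
  · rw [sum_selPsi_conj_eq_traceRight_swap, inv_kronSum_submatrix_swap]
    exact traceRight_inv_kronSum_eig hQψ hQθ fun k l => add_comm (dψ k) (dθ l) ▸ hnz l k

/-- Eigendecomposition form of the collapsed inverse `W = (Θ⊕Ψ)⁻¹`:
`∑_i (I_p⊗e_{q,i})ᵀ W (I_p⊗e_{q,i}) = Q_Θ (∑_k (Λ_Θ + λ_{Ψ,k} I_p)⁻¹) Q_Θᵀ`, and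
symmetrically for the `Ψ`-collapse. -/
theorem collapsed_inverse_eig (p q : ℕ)
    (Qθ : Matrix (Fin p) (Fin p) ℝ) (Qψ : Matrix (Fin q) (Fin q) ℝ)
    (hQθ : Qθ * Qθᵀ = 1) (hQθ' : Qθᵀ * Qθ = 1)
    (hQψ : Qψ * Qψᵀ = 1) (hQψ' : Qψᵀ * Qψ = 1)
    (dθ : Fin p → ℝ) (dψ : Fin q → ℝ)
    (hnz : ∀ (l : Fin p) (k : Fin q), dθ l + dψ k ≠ 0) :
    (∑ i : Fin q, (selTheta p q i)ᵀ
        * (kronSum (Qθ * diagonal dθ * Qθᵀ) (Qψ * diagonal dψ * Qψᵀ))⁻¹ * selTheta p q i)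
      = Qθ * (∑ k : Fin q, (diagonal dθ + dψ k • (1 : Matrix (Fin p) (Fin p) ℝ))⁻¹) * Qθᵀ ∧
    (∑ j : Fin p, (selPsi p q j)ᵀ
        * (kronSum (Qθ * diagonal dθ * Qθᵀ) (Qψ * diagonal dψ * Qψᵀ))⁻¹ * selPsi p q j)
      = Qψ * (∑ l : Fin p, (diagonal dψ + dθ l • (1 : Matrix (Fin q) (Fin q) ℝ))⁻¹) * Qψᵀ :=
  collapsed_inverse_eig_general p q Qθ Qψ hQθ hQψ dθ dψ hnz

end EiGLasso
end

section
/- Let Θ = Q_Θ Λ_Θ Q_Θ^T and Ψ = Q_Ψ Λ_Ψ Q_Ψ^T with Q_Θ (p×p) and Q_Ψ (q×q) orthogonal, Λ_Θ, Λ_Ψ diagonal with entries λ_{Θ,l}, λ_{Ψ,k}, and λ_{Θ,l} + λ_{Ψ,k} ≠ 0 for all l, k. Let W = (Θ⊕Ψ)^{-1}, P_Θ = Σ_{r=1}^q I_p⊗e_{q,r}⊗I_p⊗e_{q,r}, and Ξ_{Θ,k} = (Λ_Θ + λ_{Ψ,k} I_p)^{-1}. Then the Hessian block H_Θ = P_Θ^T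 (W⊗W) P_Θ admits the eigendecomposition H_Θ = (Q_Θ⊗Q_Θ) ( Σ_{k=1}^q Ξ_{Θ,k} ⊗ Ξ_{Θ,k} ) (Q_Θ⊗Q_Θ)^T, where Σ_{k=1}^q Ξ_{Θ,k}⊗Ξ_{Θ,k} is diagonal. -/
open Matrix
open scoped Kronecker

namespace EiGLasso

/-! ### Auxiliary lemmas -/

lemma inv_shift {p : ℕ} (d : Fin p → ℝ) (c : ℝ) (h : ∀ l, d l + c ≠ 0) :
    (diagonal d + c • (1 : Matrix (Fin p) (Fin p) ℝ))⁻¹ = diagonal (fun l => (d l + c)⁻¹) := by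
  have h1 : diagonal d + c • (1 : Matrix (Fin p) (Fin p) ℝ) = diagonal (fun l => d l + c) := by
    rw [smul_one_eq_diagonal, diagonal_add]
  rw [h1]
  apply inv_eq_right_inv
  rw [diagonal_mul_diagonal]
  rw [show (fun i => (d i + c) * (d i + c)⁻¹) = fun _ => (1:ℝ) from
    funext fun i => mul_inv_cancel₀ (h i)]
  exact diagonal_one

lemma diagonal_sum' {n : Type*} [Fintype n] [DecidableEq n] {ι : Type*} (s : Finset ι)
    (f : ι → n → ℝ) : ∑ i ∈ s, diagonal (f i) = diagonal (fun x => ∑ i ∈ s, f i x) := by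
  ext a b
  by_cases hab : a = b <;> simp [Matrix.sum_apply, diagonal_apply, hab]

lemma sel_conj' {p q : ℕ} (r s : Fin q) (A : Matrix (Fin p) (Fin p) ℝ)
    (B : Matrix (Fin q) (Fin q) ℝ) :
    (selTheta p q r)ᵀ * (A ⊗ₖ B) * (selTheta p q s) = B r s • A := by
  ext j m
  simp [Matrix.mul_apply, selTheta, Fintype.sum_prod_type, Prod.ext_iff,
    ite_and, mul_comm]

lemma sum_kronecker_left {l m n p : Type*} {ι : Type*} (s : Finset ι)
    (f : ι → Matrix l m ℝ) (B : Matrix n p ℝ) :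
    (∑ i ∈ s, f i) ⊗ₖ B = ∑ i ∈ s, (f i ⊗ₖ B) := by
  ext ⟨a,b⟩ ⟨c,d⟩
  simp [Matrix.sum_apply, kroneckerMap_apply, Finset.sum_mul]

lemma sum_kronecker_right {l m n p : Type*} {ι : Type*} (s : Finset ι)
    (A : Matrix l m ℝ) (f : ι → Matrix n p ℝ) :
    A ⊗ₖ (∑ i ∈ s, f i) = ∑ i ∈ s, (A ⊗ₖ f i) := by
  ext ⟨a,b⟩ ⟨c,d⟩
  simp [Matrix.sum_apply, kroneckerMap_apply, Finset.mul_sum]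

lemma sum4_swap {q : ℕ} {M : Type*} [AddCommMonoid M] (f : Fin q → Fin q → Fin q → Fin q → M) :
    ∑ r : Fin q, ∑ s : Fin q, ∑ k : Fin q, ∑ k' : Fin q, f r s k k'
      = ∑ k : Fin q, ∑ k' : Fin q, ∑ r : Fin q, ∑ s : Fin q, f r s k k' := by
  calc ∑ r : Fin q, ∑ s : Fin q, ∑ k : Fin q, ∑ k' : Fin q, f r s k k'
      = ∑ r : Fin q, ∑ k : Fin q, ∑ s : Fin q, ∑ k' : Fin q, f r s k k' :=
        Finset.sum_congr rfl fun r _ => Finset.sum_comm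
    _ = ∑ k : Fin q, ∑ r : Fin q, ∑ s : Fin q, ∑ k' : Fin q, f r s k k' := Finset.sum_comm
    _ = ∑ k : Fin q, ∑ r : Fin q, ∑ k' : Fin q, ∑ s : Fin q, f r s k k' :=
        Finset.sum_congr rfl fun k _ => Finset.sum_congr rfl fun r _ => Finset.sum_comm
    _ = ∑ k : Fin q, ∑ k' : Fin q, ∑ r : Fin q, ∑ s : Fin q, f r s k k' :=
        Finset.sum_congr rfl fun k _ => Finset.sum_comm

lemma kronSum_conj_s8 {p q : ℕ} (Qθ : Matrix (Fin p) (Fin p) ℝ) (Qψ : Matrix (Fin q) (Fin q) ℝ)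
    (dθ : Fin p → ℝ) (dψ : Fin q → ℝ)
    (hQθ : Qθ * Qθᵀ = 1) (hQψ : Qψ * Qψᵀ = 1) :
    kronSum (Qθ * diagonal dθ * Qθᵀ) (Qψ * diagonal dψ * Qψᵀ)
      = (Qθ ⊗ₖ Qψ) * diagonal (fun x : Fin p × Fin q => dθ x.1 + dψ x.2)
          * (Qθ ⊗ₖ Qψ)ᵀ := by
  have h1 : diagonal (fun x : Fin p × Fin q => dθ x.1 + dψ x.2)
      = kronSum (diagonal dθ) (diagonal dψ) := by
    rw [kronSum, ← diagonal_one, ← diagonal_one,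
      diagonal_kronecker_diagonal, diagonal_kronecker_diagonal, diagonal_add]
    simp
  rw [h1, kronSum, kronSum, mul_add, add_mul, ← kroneckerMap_transpose,
    ← mul_kronecker_mul, ← mul_kronecker_mul, ← mul_kronecker_mul, ← mul_kronecker_mul]
  rw [Matrix.mul_one Qψ, Matrix.mul_one Qθ, hQψ, hQθ]

lemma kronSum_inv {p q : ℕ} (Qθ : Matrix (Fin p) (Fin p) ℝ) (Qψ : Matrix (Fin q) (Fin q) ℝ)
    (dθ : Fin p → ℝ) (dψ : Fin q → ℝ)
    (hQθ : Qθ * Qθᵀ = 1) (hQθ' : Qθᵀ * Qθ = 1)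
    (hQψ : Qψ * Qψᵀ = 1) (hQψ' : Qψᵀ * Qψ = 1)
    (hnz : ∀ (l : Fin p) (k : Fin q), dθ l + dψ k ≠ 0) :
    (kronSum (Qθ * diagonal dθ * Qθᵀ) (Qψ * diagonal dψ * Qψᵀ))⁻¹
      = (Qθ ⊗ₖ Qψ) * diagonal (fun x : Fin p × Fin q => (dθ x.1 + dψ x.2)⁻¹)
          * (Qθ ⊗ₖ Qψ)ᵀ := by
  rw [kronSum_conj_s8 Qθ Qψ dθ dψ hQθ hQψ]
  apply inv_eq_right_inv
  have hMtM : (Qθ ⊗ₖ Qψ)ᵀ * (Qθ ⊗ₖ Qψ) = 1 := by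
    rw [← kroneckerMap_transpose, ← mul_kronecker_mul, hQθ', hQψ', one_kronecker_one]
  have hMMt : (Qθ ⊗ₖ Qψ) * (Qθ ⊗ₖ Qψ)ᵀ = 1 := by
    rw [← kroneckerMap_transpose, ← mul_kronecker_mul, hQθ, hQψ, one_kronecker_one]
  calc (Qθ ⊗ₖ Qψ) * diagonal (fun x : Fin p × Fin q => dθ x.1 + dψ x.2) * (Qθ ⊗ₖ Qψ)ᵀ *
        ((Qθ ⊗ₖ Qψ) * diagonal (fun x : Fin p × Fin q => (dθ x.1 + dψ x.2)⁻¹) * (Qθ ⊗ₖ Qψ)ᵀ)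
      = (Qθ ⊗ₖ Qψ) * (diagonal (fun x : Fin p × Fin q => dθ x.1 + dψ x.2) *
          ((Qθ ⊗ₖ Qψ)ᵀ * (Qθ ⊗ₖ Qψ)) *
          diagonal (fun x : Fin p × Fin q => (dθ x.1 + dψ x.2)⁻¹)) * (Qθ ⊗ₖ Qψ)ᵀ := by
        noncomm_ring
    _ = 1 := by
        rw [hMtM, Matrix.mul_one, diagonal_mul_diagonal]
        rw [show (fun i : Fin p × Fin q => (dθ i.1 + dψ i.2) * (dθ i.1 + dψ i.2)⁻¹)
            = fun _ => (1:ℝ) from funext fun i => mul_inv_cancel₀ (hnz i.1 i.2),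
          diagonal_one, Matrix.mul_one, hMMt]

/-- Eigendecomposition of the Hessian block
`H_Θ = P_Θᵀ (W⊗W) P_Θ = (Q_Θ⊗Q_Θ)(∑_k Ξ_{Θ,k}⊗Ξ_{Θ,k})(Q_Θ⊗Q_Θ)ᵀ`, with
`Ξ_{Θ,k} = (Λ_Θ + λ_{Ψ,k} I_p)⁻¹` and the middle factor diagonal. -/
theorem hessian_theta_eig (p q : ℕ)
    (Qθ : Matrix (Fin p) (Fin p) ℝ) (Qψ : Matrix (Fin q) (Fin q) ℝ)
    (hQθ : Qθ * Qθᵀ = 1) (hQθ' : Qθᵀ * Qθ = 1)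
    (hQψ : Qψ * Qψᵀ = 1) (hQψ' : Qψᵀ * Qψ = 1)
    (dθ : Fin p → ℝ) (dψ : Fin q → ℝ)
    (hnz : ∀ (l : Fin p) (k : Fin q), dθ l + dψ k ≠ 0) :
    (Ptheta p q)ᵀ
        * ((kronSum (Qθ * diagonal dθ * Qθᵀ) (Qψ * diagonal dψ * Qψᵀ))⁻¹
            ⊗ₖ (kronSum (Qθ * diagonal dθ * Qθᵀ) (Qψ * diagonal dψ * Qψᵀ))⁻¹)
        * Ptheta p q
      = (Qθ ⊗ₖ Qθ)
          * (∑ k : Fin q, (diagonal dθ + dψ k • (1 : Matrix (Fin p) (Fin p) ℝ))⁻¹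
              ⊗ₖ (diagonal dθ + dψ k • (1 : Matrix (Fin p) (Fin p) ℝ))⁻¹)
          * (Qθ ⊗ₖ Qθ)ᵀ ∧
    (∑ k : Fin q, (diagonal dθ + dψ k • (1 : Matrix (Fin p) (Fin p) ℝ))⁻¹
        ⊗ₖ (diagonal dθ + dψ k • (1 : Matrix (Fin p) (Fin p) ℝ))⁻¹)
      = diagonal (fun x : Fin p × Fin p =>
          ∑ k : Fin q, (dθ x.1 + dψ k)⁻¹ * (dθ x.2 + dψ k)⁻¹) := by
  have hΞ : ∀ k : Fin q, (diagonal dθ + dψ k • (1 : Matrix (Fin p) (Fin p) ℝ))⁻¹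
      = diagonal (fun l => (dθ l + dψ k)⁻¹) :=
    fun k => inv_shift dθ (dψ k) (fun l => hnz l k)
  -- the eigenvector matrices and projector pieces
  set Ξ : Fin q → Matrix (Fin p) (Fin p) ℝ := fun k => diagonal (fun l => (dθ l + dψ k)⁻¹)
    with hΞdef
  set E : Fin q → Matrix (Fin q) (Fin q) ℝ :=
    fun k => diagonal (fun k' => if k' = k then (1:ℝ) else 0) with hEdef
  set A : Fin q → Matrix (Fin p) (Fin p) ℝ := fun k => Qθ * Ξ k * Qθᵀ with hAdef
  set B : Fin q → Matrix (Fin q) (Fin q) ℝ := fun k => Qψ * E k * Qψᵀ with hBdef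
  -- the middle diagonal splits as a sum of kronecker products
  have hsplit : diagonal (fun x : Fin p × Fin q => (dθ x.1 + dψ x.2)⁻¹)
      = ∑ k : Fin q, Ξ k ⊗ₖ E k := by
    simp only [hΞdef, hEdef, diagonal_kronecker_diagonal, diagonal_sum']
    funext x
    simp
  -- W as a sum of Kronecker products
  have hW : (kronSum (Qθ * diagonal dθ * Qθᵀ) (Qψ * diagonal dψ * Qψᵀ))⁻¹
      = ∑ k : Fin q, A k ⊗ₖ B k := by
    rw [kronSum_inv Qθ Qψ dθ dψ hQθ hQθ' hQψ hQψ' hnz, hsplit, Finset.mul_sum,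
      Finset.sum_mul]
    exact Finset.sum_congr rfl fun k _ => by
      rw [← kroneckerMap_transpose, ← mul_kronecker_mul, ← mul_kronecker_mul]
  -- entries of B
  have hBapp : ∀ (k : Fin q) (r s : Fin q), B k r s = Qψ r k * Qψ s k := by
    intro k r s
    simp [hBdef, hEdef, Matrix.mul_apply, diagonal_apply, Finset.sum_ite_eq,
      ite_mul, mul_ite]
  -- orthogonality of columns of Qψ
  have horth : ∀ a b : Fin q, (∑ r : Fin q, Qψ r a * Qψ r b) = if a = b then 1 else 0 := by
    intro a b
    have h := congrFun (congrFun hQψ' a) b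
    simpa [Matrix.mul_apply, Matrix.one_apply, transpose_apply] using h
  have hBB : ∀ k k' : Fin q,
      (∑ r : Fin q, ∑ s : Fin q, B k r s * B k' r s) = if k = k' then 1 else 0 := by
    intro k k'
    have : (∑ r : Fin q, ∑ s : Fin q, B k r s * B k' r s)
        = (∑ r : Fin q, Qψ r k * Qψ r k') * (∑ s : Fin q, Qψ s k * Qψ s k') := by
      rw [Finset.sum_mul_sum]
      exact Finset.sum_congr rfl fun r _ => Finset.sum_congr rfl fun s _ => by
        rw [hBapp, hBapp]; ring
    rw [this, horth]
    by_cases h : k = k' <;> simp [h]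
  constructor
  · -- main Hessian identity
    rw [hW]
    -- expand Ptheta on both sides
    have hexp : (Ptheta p q)ᵀ
        * ((∑ k : Fin q, A k ⊗ₖ B k) ⊗ₖ (∑ k : Fin q, A k ⊗ₖ B k))
        * Ptheta p q
        = ∑ r : Fin q, ∑ s : Fin q,
            (((selTheta p q r)ᵀ * (∑ k : Fin q, A k ⊗ₖ B k) * selTheta p q s)
              ⊗ₖ ((selTheta p q r)ᵀ * (∑ k : Fin q, A k ⊗ₖ B k) * selTheta p q s)) := by
      rw [Ptheta, transpose_sum, Matrix.sum_mul, Matrix.sum_mul]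
      refine Finset.sum_congr rfl fun r _ => ?_
      rw [Matrix.mul_sum]
      refine Finset.sum_congr rfl fun s _ => ?_
      rw [← kroneckerMap_transpose, ← mul_kronecker_mul, ← mul_kronecker_mul]
    have hsel : ∀ r s : Fin q,
        (selTheta p q r)ᵀ * (∑ k : Fin q, A k ⊗ₖ B k) * selTheta p q s
          = ∑ k : Fin q, B k r s • A k := by
      intro r s
      rw [Matrix.mul_sum, Matrix.sum_mul]
      exact Finset.sum_congr rfl fun k _ => sel_conj' r s (A k) (B k)
    calc (Ptheta p q)ᵀ
        * ((∑ k : Fin q, A k ⊗ₖ B k) ⊗ₖ (∑ k : Fin q, A k ⊗ₖ B k))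
        * Ptheta p q
        = ∑ r : Fin q, ∑ s : Fin q,
            ((∑ k : Fin q, B k r s • A k) ⊗ₖ (∑ k : Fin q, B k r s • A k)) := by
          rw [hexp]
          exact Finset.sum_congr rfl fun r _ => Finset.sum_congr rfl fun s _ => by
            rw [hsel]
      _ = ∑ r : Fin q, ∑ s : Fin q, ∑ k : Fin q, ∑ k' : Fin q,
            (B k r s * B k' r s) • (A k ⊗ₖ A k') := by
          refine Finset.sum_congr rfl fun r _ => Finset.sum_congr rfl fun s _ => ?_
          rw [sum_kronecker_left]
          refine Finset.sum_congr rfl fun k _ => ?_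
          rw [sum_kronecker_right]
          refine Finset.sum_congr rfl fun k' _ => ?_
          rw [smul_kronecker, kronecker_smul, smul_smul]
      _ = ∑ k : Fin q, ∑ k' : Fin q,
            (∑ r : Fin q, ∑ s : Fin q, B k r s * B k' r s) • (A k ⊗ₖ A k') := by
          rw [sum4_swap]
          refine Finset.sum_congr rfl fun k _ => Finset.sum_congr rfl fun k' _ => ?_
          rw [Finset.sum_smul]
          exact Finset.sum_congr rfl fun r _ => (Finset.sum_smul).symm
      _ = ∑ k : Fin q, A k ⊗ₖ A k := by
          refine Finset.sum_congr rfl fun k _ => ?_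
          calc ∑ k' : Fin q,
                (∑ r : Fin q, ∑ s : Fin q, B k r s * B k' r s) • (A k ⊗ₖ A k')
              = ∑ k' : Fin q, (if k = k' then (1:ℝ) else 0) • (A k ⊗ₖ A k') :=
                Finset.sum_congr rfl fun k' _ => by rw [hBB]
            _ = A k ⊗ₖ A k := by simp
      _ = (Qθ ⊗ₖ Qθ)
          * (∑ k : Fin q, (diagonal dθ + dψ k • (1 : Matrix (Fin p) (Fin p) ℝ))⁻¹
              ⊗ₖ (diagonal dθ + dψ k • (1 : Matrix (Fin p) (Fin p) ℝ))⁻¹)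
          * (Qθ ⊗ₖ Qθ)ᵀ := by
          rw [Finset.mul_sum, Finset.sum_mul]
          refine Finset.sum_congr rfl fun k _ => ?_
          rw [hΞ, ← kroneckerMap_transpose, ← mul_kronecker_mul, ← mul_kronecker_mul]
  · -- diagonality of the middle factor
    simp only [hΞ, diagonal_kronecker_diagonal, diagonal_sum']
end EiGLasso
end

section
/- Let Θ = Q_Θ Λ_Θ Q_Θ^T and Ψ = Q_Ψ Λ_Ψ Q_Ψ^T with Q_Θ (p×p) and Q_Ψ (q×q) orthogonal, Λ_Θ, Λ_Ψ diagonal with entries λ_{Θ,l}, λ_{Ψ,k}, and λ_{Θ,l} + λ_{Ψ,k} ≠ 0 for all l, k. Let W = (Θ⊕Ψ)^{-1}, P_Θ = Σ_{r=1}^q I_p⊗e_{q,r}⊗I_p⊗e_{q,r}, P_Ψ = Σ_{j=1}^p e_{p,j}⊗I_q⊗e_{p,j}⊗I_q, and let q_{Θ,l} denote the l-th column of Q_Θ and q_{Ψ,k} the k-th column of Q_Ψ. Then the cross Hessian block satisfies H_{ΘΨ} = P_Θ^T (W⊗W) P_Ψ = Σ_{l=1}^p Σ_{k=1}^q (λ_{Θ,l}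 + λ_{Ψ,k})^{-2} · ( q_{Θ,l} q_{Ψ,k}^T ⊗ q_{Θ,l} q_{Ψ,k}^T ). -/
open Matrix
open scoped Kronecker

namespace EiGLasso

/- ### Auxiliary lemmas -/

lemma sel_entry (p q : ℕ)
    (N : Matrix ((Fin p × Fin q) × (Fin p × Fin q)) ((Fin p × Fin q) × (Fin p × Fin q)) ℝ)
    (r : Fin q) (s : Fin p) (j1 j2 : Fin p) (i1 i2 : Fin q) :
    ((selTheta p q r ⊗ₖ selTheta p q r)ᵀ * N * (selPsi p q s ⊗ₖ selPsi p q s)) (j1,j2) (i1,i2)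
      = N ((j1,r),(j2,r)) ((s,i1),(s,i2)) := by
  simp [Matrix.mul_apply, selTheta, selPsi, kroneckerMap_apply, Fintype.sum_prod_type,
    ite_and, Prod.ext_iff]

lemma QDQ_entry (p q : ℕ) (Qθ : Matrix (Fin p) (Fin p) ℝ) (Qψ : Matrix (Fin q) (Fin q) ℝ)
    (c : Fin p × Fin q → ℝ) (j s : Fin p) (r i : Fin q) :
    ((Qθ ⊗ₖ Qψ) * diagonal c * (Qθ ⊗ₖ Qψ)ᵀ) (j, r) (s, i)
      = (Qψ * (Matrix.of fun k l => c (l, k) * Qθ j l * Qψ i k) * Qθᵀ) r s := by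
  simp only [Matrix.mul_apply, Matrix.diagonal_apply, Matrix.transpose_apply,
    kroneckerMap_apply, Matrix.of_apply, Fintype.sum_prod_type, Prod.ext_iff, ite_and,
    mul_ite, mul_zero, ite_mul, zero_mul, Finset.sum_ite_eq', Finset.sum_ite_eq,
    Finset.sum_ite_irrel, Finset.sum_const_zero, Finset.mem_univ, if_true]
  refine Finset.sum_congr rfl fun l _ => ?_
  rw [Finset.sum_mul]
  refine Finset.sum_congr rfl fun k _ => ?_
  ring

lemma trace_QCQ (p q : ℕ) (Qθ : Matrix (Fin p) (Fin p) ℝ) (Qψ : Matrix (Fin q) (Fin q) ℝ)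
    (hQθ' : Qθᵀ * Qθ = 1) (hQψ' : Qψᵀ * Qψ = 1) (C1 C2 : Matrix (Fin q) (Fin p) ℝ) :
    trace ((Qψ * C1 * Qθᵀ) * (Qψ * C2 * Qθᵀ)ᵀ) = ∑ k, ∑ l, C1 k l * C2 k l := by
  have h : (Qψ * C1 * Qθᵀ) * (Qψ * C2 * Qθᵀ)ᵀ = Qψ * (C1 * (C2ᵀ * Qψᵀ)) := by
    simp only [Matrix.transpose_mul, Matrix.transpose_transpose, Matrix.mul_assoc]
    rw [← Matrix.mul_assoc Qθᵀ Qθ, hQθ', Matrix.one_mul]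
  rw [h, Matrix.trace_mul_comm]
  simp only [Matrix.mul_assoc]
  rw [hQψ', Matrix.mul_one]
  simp [trace, Matrix.mul_apply, Matrix.diag]

lemma sum_entry_trace (p q : ℕ) (A B : Matrix (Fin q) (Fin p) ℝ) :
    ∑ r, ∑ s, A r s * B r s = trace (A * Bᵀ) := by
  simp [trace, Matrix.mul_apply, Matrix.diag]

/-- The cross Hessian block satisfies
`H_{ΘΨ} = P_Θᵀ (W⊗W) P_Ψ = ∑_{l,k} (λ_{Θ,l}+λ_{Ψ,k})⁻² (q_{Θ,l} q_{Ψ,k}ᵀ ⊗ q_{Θ,l} q_{Ψ,k}ᵀ)`. -/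
theorem hessian_cross_eig (p q : ℕ)
    (Qθ : Matrix (Fin p) (Fin p) ℝ) (Qψ : Matrix (Fin q) (Fin q) ℝ)
    (hQθ : Qθ * Qθᵀ = 1) (hQθ' : Qθᵀ * Qθ = 1)
    (hQψ : Qψ * Qψᵀ = 1) (hQψ' : Qψᵀ * Qψ = 1)
    (dθ : Fin p → ℝ) (dψ : Fin q → ℝ)
    (hnz : ∀ (l : Fin p) (k : Fin q), dθ l + dψ k ≠ 0) :
    (Ptheta p q)ᵀ
        * ((kronSum (Qθ * diagonal dθ * Qθᵀ) (Qψ * diagonal dψ * Qψᵀ))⁻¹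
            ⊗ₖ (kronSum (Qθ * diagonal dθ * Qθᵀ) (Qψ * diagonal dψ * Qψᵀ))⁻¹)
        * Ppsi p q
      = ∑ l : Fin p, ∑ k : Fin q, ((dθ l + dψ k) ^ 2)⁻¹ •
          (vecMulVec (fun a => Qθ a l) (fun b => Qψ b k)
            ⊗ₖ vecMulVec (fun a => Qθ a l) (fun b => Qψ b k)) := by
  set Q' : Matrix (Fin p × Fin q) (Fin p × Fin q) ℝ := Qθ ⊗ₖ Qψ with hQ'def
  have hQ'r : Q' * Q'ᵀ = 1 := by
    rw [hQ'def, ← kroneckerMap_transpose, ← mul_kronecker_mul, hQθ, hQψ, one_kronecker_one]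
  have hQ'l : Q'ᵀ * Q' = 1 := by
    rw [hQ'def, ← kroneckerMap_transpose, ← mul_kronecker_mul, hQθ', hQψ', one_kronecker_one]
  set d : Fin p × Fin q → ℝ := fun x => dθ x.1 + dψ x.2 with hddef
  set c : Fin p × Fin q → ℝ := fun x => (dθ x.1 + dψ x.2)⁻¹ with hcdef
  -- Diagonalize the Kronecker sum
  have hsum : kronSum (Qθ * diagonal dθ * Qθᵀ) (Qψ * diagonal dψ * Qψᵀ)
      = Q' * diagonal d * Q'ᵀ := by
    have h1 : (Qθ * diagonal dθ * Qθᵀ) ⊗ₖ (1 : Matrix (Fin q) (Fin q) ℝ)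
        = Q' * diagonal (fun x : Fin p × Fin q => dθ x.1) * Q'ᵀ := by
      calc (Qθ * diagonal dθ * Qθᵀ) ⊗ₖ (1 : Matrix (Fin q) (Fin q) ℝ)
          = (Qθ * diagonal dθ * Qθᵀ) ⊗ₖ (Qψ * diagonal (fun _ => (1:ℝ)) * Qψᵀ) := by
            rw [diagonal_one, mul_one, hQψ]
        _ = (Qθ ⊗ₖ Qψ) * (diagonal dθ ⊗ₖ diagonal (fun _ => (1:ℝ))) * (Qθᵀ ⊗ₖ Qψᵀ) := by
            rw [← mul_kronecker_mul, ← mul_kronecker_mul]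
        _ = _ := by rw [diagonal_kronecker_diagonal, kroneckerMap_transpose]; simp [hQ'def]
    have h2 : (1 : Matrix (Fin p) (Fin p) ℝ) ⊗ₖ (Qψ * diagonal dψ * Qψᵀ)
        = Q' * diagonal (fun x : Fin p × Fin q => dψ x.2) * Q'ᵀ := by
      calc (1 : Matrix (Fin p) (Fin p) ℝ) ⊗ₖ (Qψ * diagonal dψ * Qψᵀ)
          = (Qθ * diagonal (fun _ => (1:ℝ)) * Qθᵀ) ⊗ₖ (Qψ * diagonal dψ * Qψᵀ) := by
            rw [diagonal_one, mul_one, hQθ]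
        _ = (Qθ ⊗ₖ Qψ) * (diagonal (fun _ => (1:ℝ)) ⊗ₖ diagonal dψ) * (Qθᵀ ⊗ₖ Qψᵀ) := by
            rw [← mul_kronecker_mul, ← mul_kronecker_mul]
        _ = _ := by rw [diagonal_kronecker_diagonal, kroneckerMap_transpose]; simp [hQ'def]
    rw [kronSum, h1, h2, ← add_mul, ← mul_add, ← diagonal_add]
  -- Compute the inverse
  have hinv : (kronSum (Qθ * diagonal dθ * Qθᵀ) (Qψ * diagonal dψ * Qψᵀ))⁻¹
      = Q' * diagonal c * Q'ᵀ := by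
    apply Matrix.inv_eq_right_inv
    rw [hsum]
    calc Q' * diagonal d * Q'ᵀ * (Q' * diagonal c * Q'ᵀ)
        = Q' * (diagonal d * ((Q'ᵀ * Q') * (diagonal c * Q'ᵀ))) := by
          simp only [Matrix.mul_assoc]
      _ = Q' * (diagonal d * diagonal c) * Q'ᵀ := by
          rw [hQ'l, Matrix.one_mul]; simp only [Matrix.mul_assoc]
      _ = Q' * Q'ᵀ := by
          rw [diagonal_mul_diagonal]
          have : (fun x : Fin p × Fin q => d x * c x) = fun _ => (1:ℝ) := by
            funext x
            exact mul_inv_cancel₀ (hnz x.1 x.2)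
          rw [this, diagonal_one, Matrix.mul_one]
      _ = 1 := hQ'r
  rw [hinv]
  set M : Matrix (Fin p × Fin q) (Fin p × Fin q) ℝ := Q' * diagonal c * Q'ᵀ with hMdef
  -- pointwise computation
  ext ⟨j1, j2⟩ ⟨i1, i2⟩
  have hLHS : ((Ptheta p q)ᵀ * (M ⊗ₖ M) * Ppsi p q) (j1, j2) (i1, i2)
      = ∑ r : Fin q, ∑ s : Fin p, M (j1, r) (s, i1) * M (j2, r) (s, i2) := by
    rw [Ptheta, Ppsi, Matrix.transpose_sum, Matrix.sum_mul, Matrix.sum_mul,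
      Matrix.sum_apply]
    refine Finset.sum_congr rfl fun r _ => ?_
    rw [Matrix.mul_sum, Matrix.sum_apply]
    refine Finset.sum_congr rfl fun s _ => ?_
    rw [sel_entry]
    rfl
  rw [hLHS]
  -- rewrite M entries via the C matrices
  set C : Fin p → Fin q → Matrix (Fin q) (Fin p) ℝ :=
    fun j i => Matrix.of fun k l => c (l, k) * Qθ j l * Qψ i k with hCdef
  have hM : ∀ (j s : Fin p) (r i : Fin q), M (j, r) (s, i) = (Qψ * C j i * Qθᵀ) r s :=
    fun j s r i => QDQ_entry p q Qθ Qψ c j s r i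
  calc ∑ r : Fin q, ∑ s : Fin p, M (j1, r) (s, i1) * M (j2, r) (s, i2)
      = ∑ r : Fin q, ∑ s : Fin p,
          (Qψ * C j1 i1 * Qθᵀ) r s * (Qψ * C j2 i2 * Qθᵀ) r s := by
        refine Finset.sum_congr rfl fun r _ => Finset.sum_congr rfl fun s _ => ?_
        rw [hM, hM]
    _ = trace ((Qψ * C j1 i1 * Qθᵀ) * (Qψ * C j2 i2 * Qθᵀ)ᵀ) :=
        sum_entry_trace p q _ _
    _ = ∑ k, ∑ l, C j1 i1 k l * C j2 i2 k l :=
        trace_QCQ p q Qθ Qψ hQθ' hQψ' _ _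
    _ = _ := by
        rw [Finset.sum_comm]
        simp only [Matrix.sum_apply, Matrix.smul_apply, kroneckerMap_apply,
          vecMulVec_apply, smul_eq_mul, hCdef, Matrix.of_apply]
        refine Finset.sum_congr rfl fun l _ => Finset.sum_congr rfl fun k _ => ?_
        have h2 : ((dθ l + dψ k) ^ 2)⁻¹ = c (l, k) * c (l, k) := by
          rw [hcdef]; simp [sq, mul_inv]
        rw [h2]; ring
end EiGLasso
end

section
/- Let p, q ≥ 1, let W be a real symmetric positive definite pq×pq matrix, let P = [P_Θ P_Ψ] be the p²q² × (p²+q²) matrix with blocks P_Θ = Σ_{i=1}^q I_p⊗e_{q,i}⊗I_p⊗e_{q,i} and P_Ψ = Σ_{j=1}^p e_{p,j}⊗I_q⊗e_{p,j}⊗I_q, and let H = P^T (W⊗W) P. Then H is positive semidefinite, and its null space is exactly { [vec(X_p); vec(X_q)] : X_p ∈ ℝ^{p×p}, X_q ∈ ℝ^{q×q}, X_p ⊕ X_q = 0 }; that is, H·[vec(X_p); vec(X_q)] = 0 if and only if X_p⊕X_q = 0. -/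
open Matrix
open scoped Kronecker

namespace EiGLasso

lemma P_mulVec (p q : ℕ) (Xp : Matrix (Fin p) (Fin p) ℝ) (Xq : Matrix (Fin q) (Fin q) ℝ) :
    (fromCols (Ptheta p q) (Ppsi p q)).mulVec (Sum.elim (vec Xp) (vec Xq))
      = vec (kronSum Xp Xq) := by
  rw [fromCols_mulVec_sumElim]
  ext ⟨⟨a,b⟩,⟨c,d⟩⟩
  simp only [Pi.add_apply, mulVec, dotProduct, Ptheta, Ppsi, selTheta, selPsi,
    Finset.sum_apply, kroneckerMap_apply, vec, kronSum, Matrix.add_apply, one_apply, of_apply,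
    Matrix.sum_apply, Prod.mk.injEq, Prod.ext_iff, ite_and, Fintype.sum_prod_type]
  simp [Finset.sum_ite_eq, Finset.sum_ite_eq', ite_mul, mul_comm, eq_comm]

/-- For `W` positive definite and `P = [P_Θ P_Ψ]`, the Hessian
`H = Pᵀ (W⊗W) P` is positive semidefinite and its null space is exactly
`{ [vec(X_p); vec(X_q)] : X_p ⊕ X_q = 0 }`. -/
theorem hessian_psd_nullspace (p q : ℕ) (hp : 1 ≤ p) (hq : 1 ≤ q)
    (W : Matrix (Fin p × Fin q) (Fin p × Fin q) ℝ) (hW : W.PosDef) :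
    ((fromCols (Ptheta p q) (Ppsi p q))ᵀ * (W ⊗ₖ W)
        * fromCols (Ptheta p q) (Ppsi p q)).PosSemidef ∧
    ∀ (Xp : Matrix (Fin p) (Fin p) ℝ) (Xq : Matrix (Fin q) (Fin q) ℝ),
      ((fromCols (Ptheta p q) (Ppsi p q))ᵀ * (W ⊗ₖ W)
          * fromCols (Ptheta p q) (Ppsi p q)).mulVec (Sum.elim (vec Xp) (vec Xq)) = 0
        ↔ kronSum Xp Xq = 0 := by
  have hWs := hW.posSemidef
  set P := fromCols (Ptheta p q) (Ppsi p q) with hP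
  obtain ⟨S, hSt, hSS⟩ : ∃ S : Matrix (Fin p × Fin q) (Fin p × Fin q) ℝ, Sᵀ = S ∧ S * S = W := by
    open scoped MatrixOrder in
    refine ⟨CFC.sqrt W, ?_, CFC.sqrt_mul_sqrt_self W hWs.nonneg⟩
    open scoped MatrixOrder in
    have h := (CFC.sqrt_nonneg W).posSemidef.1
    rwa [Matrix.IsHermitian, conjTranspose_eq_transpose_of_trivial] at h
  set C := S ⊗ₖ S with hC
  have hCt : Cᵀ = C := by rw [hC, ← Matrix.kroneckerMap_transpose, hSt]
  have hCC : C * C = W ⊗ₖ W := by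
    rw [hC, ← Matrix.mul_kronecker_mul, hSS]
  have hH : Pᵀ * (W ⊗ₖ W) * P = (C * P)ᵀ * (C * P) := by
    rw [Matrix.transpose_mul, hCt, ← hCC]; simp only [Matrix.mul_assoc]
  have hdetC : C.det ≠ 0 := by
    have hdetS : S.det ≠ 0 := by
      intro h
      have : W.det = 0 := by rw [← hSS, Matrix.det_mul, h, mul_zero]
      exact hW.det_pos.ne' this
    rw [hC, Matrix.det_kronecker]
    positivity
  have hCinj : Function.Injective C.mulVec :=
    mulVec_injective_iff_isUnit.2 (isUnit_iff_isUnit_det C |>.2 hdetC.isUnit)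
  constructor
  · rw [hH]
    have := Matrix.posSemidef_conjTranspose_mul_self (C * P)
    rwa [conjTranspose_eq_transpose_of_trivial] at this
  · intro Xp Xq
    constructor
    · intro h
      have hq0 : Sum.elim (vec Xp) (vec Xq) ⬝ᵥ
          ((Pᵀ * (W ⊗ₖ W) * P).mulVec (Sum.elim (vec Xp) (vec Xq))) = 0 := by
        rw [h, dotProduct_zero]
      rw [hH, ← Matrix.mulVec_mulVec, dotProduct_mulVec, vecMul_transpose,
        dotProduct_self_eq_zero] at hq0
      have hPv : P.mulVec (Sum.elim (vec Xp) (vec Xq)) = 0 := by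
        refine hCinj ?_
        rw [Matrix.mulVec_mulVec, Matrix.mulVec_zero]
        exact hq0
      rw [hP, P_mulVec] at hPv
      ext i j
      exact congrFun hPv (j, i)
    · intro h
      have hPv : P.mulVec (Sum.elim (vec Xp) (vec Xq)) = 0 := by
        rw [hP, P_mulVec, h]
        ext x
        simp [vec]
      rw [Matrix.mul_assoc, ← Matrix.mulVec_mulVec, ← Matrix.mulVec_mulVec, hPv,
        Matrix.mulVec_zero, Matrix.mulVec_zero]


end EiGLasso
end

section
/- Let p, q ≥ 1, P_Θ = Σ_{i=1}^q I_p⊗e_{q,i}⊗I_p⊗e_{q,i}, P_Ψ = Σ_{j=1}^p e_{p,j}⊗I_q⊗e_{p,j}⊗I_q, and P = [P_Θ P_Ψ]. Then P_Θ^T P_Θ = q·I_{p²}, P_Ψ^T P_Ψ = p·I_{q²}, and P_Θ^T P_Ψ = vec(I_p)·vec(I_q)^T. Moreover the characteristic polynomial of the (p²+q²)×(p²+q²) matrix P^T P is det(P^T P − λ·I) = (p−λ)^{q²−1} (q−λ)^{p²−1} λ (λ−(p+q)); in particular the eigenvalues of P^T P are 0, p, q, and p+q with algebraic multiplicities 1,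 q²−1, p²−1, and 1, respectively. -/
/-!
`P_Θ` and `P_Ψ` are sums of Kronecker squares `S ⊗ S` of selection matrices, so by the
mixed-product rule every block of `PᵀP` is a sum of Kronecker squares of the small products
`Sᵢᵀ Sₖ`, which are `δᵢₖ I` or a matrix unit `e_j e_iᵀ`. Hence
`PᵀP = [[q I, u vᵀ], [v uᵀ, p I]]` with `u = vec I_p`, `v = vec I_q`, `‖u‖² = p`, `‖v‖² = q`.
The Schur complement of `(q - λ) I` in `PᵀP - λ I` is `(p - λ) I - p/(q - λ) · v vᵀ`, whose
determinant is given by the matrix determinant lemma.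
-/

open Matrix
open scoped Kronecker

namespace EiGLasso

theorem transpose_sum_kronecker_self_mul_sum_kronecker_self {α ι κ l m n : Type*}
    [CommSemiring α] [Fintype ι] [Fintype κ] [Fintype l]
    (A : ι → Matrix l m α) (B : κ → Matrix l n α) :
    (∑ i, A i ⊗ₖ A i)ᵀ * ∑ k, B k ⊗ₖ B k = ∑ i, ∑ k, ((A i)ᵀ * B k) ⊗ₖ ((A i)ᵀ * B k) := by
  simp only [transpose_sum, Matrix.sum_mul, Matrix.mul_sum, ← kroneckerMap_transpose,
    ← mul_kronecker_mul]
  exact Finset.sum_comm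

section Selection

variable (p q : ℕ)

theorem selTheta_transpose_mul_selTheta (i k : Fin q) :
    (selTheta p q i)ᵀ * selTheta p q k = if i = k then 1 else 0 := by
  ext j j'
  split_ifs with h
  · subst h
    simp [mul_apply, selTheta, one_apply, Prod.ext_iff, Fintype.sum_prod_type, ite_and, eq_comm]
  · simp [mul_apply, selTheta, Prod.ext_iff, Fintype.sum_prod_type, ite_and, Ne.symm h]

theorem selPsi_transpose_mul_selPsi (j l : Fin p) :
    (selPsi p q j)ᵀ * selPsi p q l = if j = l then 1 else 0 := by
  ext i i'
  split_ifs with h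
  · subst h
    simp [mul_apply, selPsi, one_apply, Prod.ext_iff, Fintype.sum_prod_type, ite_and, eq_comm]
  · simp [mul_apply, selPsi, Prod.ext_iff, Fintype.sum_prod_type, ite_and, Ne.symm h]

theorem selTheta_transpose_mul_selPsi (i : Fin q) (j : Fin p) :
    (selTheta p q i)ᵀ * selPsi p q j = single j i 1 := by
  ext a b
  simp [mul_apply, selTheta, selPsi, single_apply, Prod.ext_iff, Fintype.sum_prod_type, ite_and,
    eq_comm]

theorem transpose_Ptheta_mul_Ptheta :
    (Ptheta p q)ᵀ * Ptheta p q = (q : ℝ) • (1 : Matrix (Fin p × Fin p) (Fin p × Fin p) ℝ) := by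
  simp [Ptheta, transpose_sum_kronecker_self_mul_sum_kronecker_self,
    selTheta_transpose_mul_selTheta, apply_ite (kroneckerMap _ _), Nat.cast_smul_eq_nsmul]

theorem transpose_Ppsi_mul_Ppsi :
    (Ppsi p q)ᵀ * Ppsi p q = (p : ℝ) • (1 : Matrix (Fin q × Fin q) (Fin q × Fin q) ℝ) := by
  simp [Ppsi, transpose_sum_kronecker_self_mul_sum_kronecker_self,
    selPsi_transpose_mul_selPsi, apply_ite (kroneckerMap _ _), Nat.cast_smul_eq_nsmul]

theorem transpose_Ptheta_mul_Ppsi :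
    (Ptheta p q)ᵀ * Ppsi p q
      = vecMulVec (vec (1 : Matrix (Fin p) (Fin p) ℝ)) (vec (1 : Matrix (Fin q) (Fin q) ℝ)) := by
  rw [Ptheta, Ppsi, transpose_sum_kronecker_self_mul_sum_kronecker_self]
  ext ⟨a, a'⟩ ⟨b, b'⟩
  simp only [selTheta_transpose_mul_selPsi, Matrix.sum_apply, kroneckerMap_apply, single_apply,
    ite_and, mul_ite, mul_one, mul_zero, Finset.sum_ite_eq', Finset.mem_univ, ↓reduceIte,
    vecMulVec_apply, vec, one_apply]
  split_ifs <;> rfl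

end Selection

theorem vec_one_dotProduct_vec_one {n : Type*} [Fintype n] [DecidableEq n] :
    vec (1 : Matrix n n ℝ) ⬝ᵥ vec (1 : Matrix n n ℝ) = Fintype.card n := by
  simp [vec, dotProduct, Fintype.sum_prod_type, one_apply]

theorem fromBlocks_sub_smul_one {R m n : Type*} [CommRing R] [DecidableEq m] [DecidableEq n]
    (A : Matrix m m R) (B : Matrix m n R) (C : Matrix n m R) (D : Matrix n n R) (t : R) :
    fromBlocks A B C D - t • 1 = fromBlocks (A - t • 1) B C (D - t • 1) := by
  rw [← fromBlocks_one, fromBlocks_smul, sub_eq_add_neg, fromBlocks_neg, fromBlocks_add]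
  simp [sub_eq_add_neg]

section BlockDeterminant

variable {m n : Type*} [Fintype m] [Fintype n] [DecidableEq m] [DecidableEq n]

theorem det_smul_one_add_vecMulVec {K : Type*} [Field K] [Nonempty n] {a : K} (ha : a ≠ 0)
    (x y : n → K) :
    det (a • 1 + vecMulVec x y) = a ^ (Fintype.card n - 1) * (a + y ⬝ᵥ x) := by
  have hfactor : a • 1 + vecMulVec x y
      = a • (1 + replicateCol Unit (a⁻¹ • x) * replicateRow Unit y) := by
    rw [← vecMulVec_eq, smul_add, ← smul_vecMulVec, smul_smul, mul_inv_cancel₀ ha, one_smul]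
  rw [hfactor, det_smul, det_one_add_replicateCol_mul_replicateRow, dotProduct_smul, smul_eq_mul,
    ← pow_sub_one_mul Fintype.card_ne_zero]
  field_simp

theorem det_fromBlocks_smul_one_vecMulVec {K : Type*} [Field K] [Nonempty m] [Nonempty n]
    {a b : K} (ha : a ≠ 0) (hb : b ≠ 0) (u : m → K) (v : n → K) :
    det (fromBlocks (a • 1) (vecMulVec u v) (vecMulVec v u) (b • 1))
      = a ^ (Fintype.card m - 1) * b ^ (Fintype.card n - 1) * (a * b - (u ⬝ᵥ u) * (v ⬝ᵥ v)) := by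
  let : Invertible (a • (1 : Matrix m m K)) :=
    invertibleOfLeftInverse _ (a⁻¹ • 1) (by
      rw [smul_mul_smul_comm, one_mul, inv_mul_cancel₀ ha, one_smul])
  have hschur : b • 1 - vecMulVec v u * ⅟(a • (1 : Matrix m m K)) * vecMulVec u v
      = b • 1 + vecMulVec v (-(a⁻¹ * (u ⬝ᵥ u)) • v) := by
    have hinv : ⅟(a • (1 : Matrix m m K)) = a⁻¹ • 1 := rfl
    rw [hinv, Matrix.mul_smul, Matrix.mul_one, Matrix.smul_mul, vecMulVec_mul_vecMulVec,
      vecMulVec_smul, vecMulVec_smul, smul_smul, sub_eq_add_neg, neg_smul, mul_comm]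
  rw [det_fromBlocks₁₁, hschur, det_smul_one_add_vecMulVec hb, det_smul, det_one, mul_one,
    ← pow_sub_one_mul Fintype.card_ne_zero, smul_dotProduct, smul_eq_mul]
  field_simp
  ring

-- Schur complement away from `t ∈ {a, b}`; both sides are continuous in `t`, which covers the rest.
theorem det_fromBlocks_smul_one_vecMulVec_sub_smul_one [Nonempty m] [Nonempty n] (a b : ℝ)
    (u : m → ℝ) (v : n → ℝ) (t : ℝ) :
    det (fromBlocks (a • 1) (vecMulVec u v) (vecMulVec v u) (b • 1) - t • 1)
      = (a - t) ^ (Fintype.card m - 1) * (b - t) ^ (Fintype.card n - 1)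
          * ((a - t) * (b - t) - (u ⬝ᵥ u) * (v ⬝ᵥ v)) := by
  have hgeneric : Set.EqOn
      (fun t => det (fromBlocks (a • 1) (vecMulVec u v) (vecMulVec v u) (b • 1) - t • 1))
      (fun t => (a - t) ^ (Fintype.card m - 1) * (b - t) ^ (Fintype.card n - 1)
          * ((a - t) * (b - t) - (u ⬝ᵥ u) * (v ⬝ᵥ v)))
      {a, b}ᶜ := by
    intro t ht
    simp only [Set.mem_compl_iff, Set.mem_insert_iff, Set.mem_singleton_iff, not_or] at ht
    simp only [fromBlocks_sub_smul_one, ← sub_smul]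
    exact det_fromBlocks_smul_one_vecMulVec (sub_ne_zero.2 (Ne.symm ht.1))
      (sub_ne_zero.2 (Ne.symm ht.2)) u v
  exact congrFun (Continuous.ext_on ((Set.toFinite _).countable.dense_compl ℝ)
    (by fun_prop) (by fun_prop) hgeneric) t

end BlockDeterminant

/-- `P_Θᵀ P_Θ = q I_{p²}`, `P_Ψᵀ P_Ψ = p I_{q²}`,
`P_Θᵀ P_Ψ = vec(I_p) vec(I_q)ᵀ`, and the characteristic polynomial of `Pᵀ P` for
`P = [P_Θ P_Ψ]` is `det(PᵀP − λI) = (p−λ)^{q²−1} (q−λ)^{p²−1} λ (λ−(p+q))`;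
in particular the eigenvalues of `PᵀP` are `0, p, q, p+q` with algebraic multiplicities
`1, q²−1, p²−1, 1`. -/
theorem PtP_structure (p q : ℕ) (hp : 1 ≤ p) (hq : 1 ≤ q) :
    (Ptheta p q)ᵀ * Ptheta p q = (q : ℝ) • (1 : Matrix (Fin p × Fin p) (Fin p × Fin p) ℝ) ∧
    (Ppsi p q)ᵀ * Ppsi p q = (p : ℝ) • (1 : Matrix (Fin q × Fin q) (Fin q × Fin q) ℝ) ∧
    (Ptheta p q)ᵀ * Ppsi p q
      = vecMulVec (vec (1 : Matrix (Fin p) (Fin p) ℝ)) (vec (1 : Matrix (Fin q) (Fin q) ℝ)) ∧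
    ∀ lam : ℝ,
      ((fromCols (Ptheta p q) (Ppsi p q))ᵀ * fromCols (Ptheta p q) (Ppsi p q)
          - lam • 1).det
        = ((p : ℝ) - lam) ^ (q ^ 2 - 1) * ((q : ℝ) - lam) ^ (p ^ 2 - 1)
            * lam * (lam - ((p : ℝ) + (q : ℝ))) := by
  have hcross := transpose_Ptheta_mul_Ppsi p q
  have hcross' : (Ppsi p q)ᵀ * Ptheta p q = vecMulVec (vec 1) (vec 1) := by
    rw [← transpose_vecMulVec, ← hcross, transpose_mul, transpose_transpose]
  refine ⟨transpose_Ptheta_mul_Ptheta p q, transpose_Ppsi_mul_Ppsi p q, hcross, fun lam => ?_⟩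
  have : NeZero p := NeZero.of_pos hp
  have : NeZero q := NeZero.of_pos hq
  rw [transpose_fromCols, fromRows_mul_fromCols, transpose_Ptheta_mul_Ptheta,
    transpose_Ppsi_mul_Ppsi, hcross, hcross', det_fromBlocks_smul_one_vecMulVec_sub_smul_one,
    vec_one_dotProduct_vec_one, vec_one_dotProduct_vec_one]
  simp only [Fintype.card_prod, Fintype.card_fin, ← sq]
  ring

end EiGLasso
end

section
/- Let p, q ≥ 1, let W be a real symmetric positive definite pq×pq matrix with smallest eigenvalue λ_{W,min} and largest eigenvalue λ_{W,max}, let P = [P_Θ P_Ψ] with P_Θ = Σ_{i=1}^q I_p⊗e_{q,i}⊗I_p⊗e_{q,i} and P_Ψ = Σ_{j=1}^p e_{p,j}⊗I_q⊗e_{p,j}⊗I_q, and let H = P^T(W⊗W)P. Then for every unit vector u ∈ ℝ^{p²+q²} that is orthogonal to the null space of H: min{p,q}·λ_{W,min}² ≤ u^T H u ≤ (p+q)·λ_{W,max}². In particular, on the orthogonal complement of its null space, the smallest eigenvalue of H is at least min{p,q}·λ_{W,min}² and its largest eigenvalue is at most (p+q)·λ_{W,max}². -/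
open Matrix
open scoped Kronecker

/-!
Write `u = (vec Θ, vec Ψ)`. Then `P u = vec (Θ ⊕ Ψ)`, so `uᵀ H u = wᵀ (W ⊗ W) w` with
`w = vec (Θ ⊕ Ψ)`, and `λ_min² I ≤ W ⊗ W ≤ λ_max² I` in the Loewner order. It remains to compare
`‖w‖² = q ‖Θ‖² + p ‖Ψ‖² + 2 tr Θ tr Ψ` with `‖u‖² = ‖Θ‖² + ‖Ψ‖² = 1`. The vector `(vec I, -vec I)`
lies in the null space of `H` because `I ⊕ (-I) = 0`, so orthogonality gives `tr Θ = tr Ψ` and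
hence `‖w‖² ≥ min p q`. For the upper bound, `2 tr Θ tr Ψ ≤ (tr Θ)² + (tr Ψ)² ≤ p ‖Θ‖² + q ‖Ψ‖²`
by Cauchy–Schwarz.
-/

open scoped MatrixOrder ComplexOrder

namespace Matrix

section Kronecker

variable {R l m n o : Type*} [Ring R]

theorem kronecker_sub (A : Matrix l m R) (B₁ B₂ : Matrix n o R) :
    A ⊗ₖ (B₁ - B₂) = A ⊗ₖ B₁ - A ⊗ₖ B₂ := by
  ext; simp [mul_sub]

theorem sub_kronecker (A₁ A₂ : Matrix l m R) (B : Matrix n o R) :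
    (A₁ - A₂) ⊗ₖ B = A₁ ⊗ₖ B - A₂ ⊗ₖ B := by
  ext; simp [sub_mul]

end Kronecker

section LoewnerOrder

variable {𝕜 m n : Type*} [RCLike 𝕜]

theorem kronecker_le_kronecker_left [Fintype m] [Fintype n] {C : Matrix m m 𝕜}
    {X Y : Matrix n n 𝕜} (hC : 0 ≤ C) (h : X ≤ Y) : C ⊗ₖ X ≤ C ⊗ₖ Y := by
  rw [le_iff, ← kronecker_sub]
  exact hC.posSemidef.kronecker (le_iff.1 h)

theorem kronecker_le_kronecker_right [Fintype m] [Fintype n] {C : Matrix n n 𝕜}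
    {X Y : Matrix m m 𝕜} (hC : 0 ≤ C) (h : X ≤ Y) : X ⊗ₖ C ≤ Y ⊗ₖ C := by
  rw [le_iff, ← sub_kronecker]
  exact (le_iff.1 h).kronecker hC.posSemidef

theorem smul_one_kronecker_smul_one [DecidableEq m] [DecidableEq n] (a b : ℝ) :
    (a • 1 : Matrix m m 𝕜) ⊗ₖ (b • 1 : Matrix n n 𝕜) = (a * b) • 1 := by
  rw [smul_kronecker, kronecker_smul, one_kronecker_one, smul_smul]

theorem smul_one_nonneg [DecidableEq n] {b : ℝ} (hb : 0 ≤ b) : 0 ≤ (b • 1 : Matrix n n 𝕜) :=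
  (PosSemidef.one.smul hb).nonneg

theorem smul_one_le_kronecker [Fintype m] [Fintype n] [DecidableEq m] [DecidableEq n]
    {A : Matrix m m 𝕜} {B : Matrix n n 𝕜} {a b : ℝ}
    (hA₀ : 0 ≤ A) (hb : 0 ≤ b) (hA : a • 1 ≤ A) (hB : b • 1 ≤ B) :
    (a * b) • 1 ≤ A ⊗ₖ B := by
  rw [← smul_one_kronecker_smul_one]
  exact (kronecker_le_kronecker_right (smul_one_nonneg hb) hA).trans
    (kronecker_le_kronecker_left hA₀ hB)

theorem kronecker_le_smul_one [Fintype m] [Fintype n] [DecidableEq m] [DecidableEq n]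
    {A : Matrix m m 𝕜} {B : Matrix n n 𝕜} {a b : ℝ}
    (hA₀ : 0 ≤ A) (hb : 0 ≤ b) (hA : A ≤ a • 1) (hB : B ≤ b • 1) :
    A ⊗ₖ B ≤ (a * b) • 1 := by
  rw [← smul_one_kronecker_smul_one]
  exact (kronecker_le_kronecker_left hA₀ hB).trans
    (kronecker_le_kronecker_right (smul_one_nonneg hb) hA)

theorem smul_one_le_of_forall_le_spectrum [Fintype n] [DecidableEq n] {A : Matrix n n 𝕜}
    (hA : A.IsHermitian) {a : ℝ} (h : ∀ x ∈ spectrum ℝ A, a ≤ x) : a • 1 ≤ A := by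
  rw [← Algebra.algebraMap_eq_smul_one]
  exact (algebraMap_le_iff_le_spectrum hA.isSelfAdjoint).2 h

theorem le_smul_one_of_forall_spectrum_le [Fintype n] [DecidableEq n] {A : Matrix n n 𝕜}
    (hA : A.IsHermitian) {a : ℝ} (h : ∀ x ∈ spectrum ℝ A, x ≤ a) : A ≤ a • 1 := by
  rw [← Algebra.algebraMap_eq_smul_one]
  exact (le_algebraMap_iff_spectrum_le hA.isSelfAdjoint).2 h

end LoewnerOrder

section RealQuadraticForm

variable {n : Type*} [Fintype n] [DecidableEq n]

theorem smul_dotProduct_le_of_smul_one_le {A : Matrix n n ℝ} {a : ℝ} (h : a • 1 ≤ A)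
    (x : n → ℝ) : a * (x ⬝ᵥ x) ≤ x ⬝ᵥ A *ᵥ x := by
  simpa [sub_mulVec, smul_mulVec] using (le_iff.1 h).dotProduct_mulVec_nonneg x

theorem dotProduct_le_smul_of_le_smul_one {A : Matrix n n ℝ} {a : ℝ} (h : A ≤ a • 1)
    (x : n → ℝ) : x ⬝ᵥ A *ᵥ x ≤ a * (x ⬝ᵥ x) := by
  simpa [sub_mulVec, smul_mulVec] using (le_iff.1 h).dotProduct_mulVec_nonneg x

end RealQuadraticForm

theorem setOf_exists_mulVec_eq_smul_eq_spectrum {K n : Type*} [Field K] [Fintype n]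
    [DecidableEq n] (A : Matrix n n K) :
    {μ : K | ∃ v : n → K, v ≠ 0 ∧ A *ᵥ v = μ • v} = spectrum K A := by
  ext μ
  rw [Set.mem_ofPred_eq, ← spectrum_toLin', ← Module.End.hasEigenvalue_iff_mem_spectrum]
  constructor
  · rintro ⟨v, hv, hAv⟩
    exact Module.End.hasEigenvalue_of_hasEigenvector ⟨Module.End.mem_eigenspace_iff.2 hAv, hv⟩
  · intro h
    obtain ⟨v, hv⟩ := h.exists_hasEigenvector
    exact ⟨v, hv.2, hv.apply_eq_smul⟩

theorem dotProduct_transpose_mul_mul_mulVec {R m n : Type*} [CommSemiring R] [Fintype m]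
    [Fintype n] (P : Matrix m n R) (M : Matrix m m R) (x : n → R) :
    x ⬝ᵥ (Pᵀ * M * P) *ᵥ x = (P *ᵥ x) ⬝ᵥ M *ᵥ (P *ᵥ x) := by
  rw [← mulVec_mulVec, ← mulVec_mulVec, dotProduct_mulVec, vecMul_transpose]

theorem sq_dotProduct_le {R n : Type*} [CommSemiring R] [LinearOrder R] [IsStrictOrderedRing R]
    [ExistsAddOfLE R] [Fintype n] (v w : n → R) :
    (v ⬝ᵥ w) ^ 2 ≤ (v ⬝ᵥ v) * (w ⬝ᵥ w) := by
  simpa only [dotProduct, sq] using Finset.sum_mul_sq_le_sq_mul_sq Finset.univ v w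

section Vec

variable {n : Type*} [Fintype n] [DecidableEq n]

theorem vec_dotProduct_vec_one (A : Matrix n n ℝ) : vec A ⬝ᵥ vec 1 = trace A := by
  rw [vec_dotProduct_vec, Matrix.mul_one, trace_transpose]

theorem sq_trace_le_card_mul (A : Matrix n n ℝ) :
    trace A ^ 2 ≤ Fintype.card n * (vec A ⬝ᵥ vec A) := by
  rw [← vec_dotProduct_vec_one, ← trace_one (n := n) (R := ℝ), ← vec_dotProduct_vec_one,
    mul_comm]
  exact sq_dotProduct_le ..

end Vec

end Matrix

namespace EiGLasso

theorem vec_eq_matrix_vec {m n : Type*} (A : Matrix m n ℝ) : vec A = Matrix.vec A := rfl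

theorem sum_selTheta_mul_mul_transpose (p q : ℕ) (Θ : Matrix (Fin p) (Fin p) ℝ) :
    ∑ i, selTheta p q i * Θ * (selTheta p q i)ᵀ = Θ ⊗ₖ 1 := by
  ext ⟨a, b⟩ ⟨c, d⟩
  simp [selTheta, Matrix.mul_apply, Matrix.sum_apply, one_apply, Prod.ext_iff, ite_and, eq_comm]

theorem sum_selPsi_mul_mul_transpose (p q : ℕ) (Ψ : Matrix (Fin q) (Fin q) ℝ) :
    ∑ j, selPsi p q j * Ψ * (selPsi p q j)ᵀ = 1 ⊗ₖ Ψ := by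
  ext ⟨a, b⟩ ⟨c, d⟩
  simp [selPsi, Matrix.mul_apply, Matrix.sum_apply, one_apply, Prod.ext_iff, ite_and, eq_comm]

theorem Ptheta_mulVec_vec (p q : ℕ) (Θ : Matrix (Fin p) (Fin p) ℝ) :
    Ptheta p q *ᵥ vec Θ = vec (Θ ⊗ₖ 1) := by
  simp only [Ptheta, vec_eq_matrix_vec, Matrix.sum_mulVec, kronecker_mulVec_vec, ← vec_sum,
    sum_selTheta_mul_mul_transpose]

theorem Ppsi_mulVec_vec (p q : ℕ) (Ψ : Matrix (Fin q) (Fin q) ℝ) :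
    Ppsi p q *ᵥ vec Ψ = vec (1 ⊗ₖ Ψ) := by
  simp only [Ppsi, vec_eq_matrix_vec, Matrix.sum_mulVec, kronecker_mulVec_vec, ← vec_sum,
    sum_selPsi_mul_mul_transpose]

theorem fromCols_Ptheta_Ppsi_mulVec_sumElim_vec (p q : ℕ) (Θ : Matrix (Fin p) (Fin p) ℝ)
    (Ψ : Matrix (Fin q) (Fin q) ℝ) :
    fromCols (Ptheta p q) (Ppsi p q) *ᵥ Sum.elim (vec Θ) (vec Ψ) = vec (kronSum Θ Ψ) := by
  rw [fromCols_mulVec_sumElim, Ptheta_mulVec_vec, Ppsi_mulVec_vec, kronSum]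
  rfl

theorem kronSum_one_neg_one (p q : ℕ) :
    kronSum (1 : Matrix (Fin p) (Fin p) ℝ) (-1 : Matrix (Fin q) (Fin q) ℝ) = 0 := by
  rw [kronSum, ← neg_one_smul ℝ 1, kronecker_smul, one_kronecker_one, neg_one_smul,
    add_neg_cancel]

theorem trace_eq_trace_of_orthogonal_ker (p q : ℕ)
    (M : Matrix ((Fin p × Fin q) × (Fin p × Fin q)) ((Fin p × Fin q) × (Fin p × Fin q)) ℝ)
    (Θ : Matrix (Fin p) (Fin p) ℝ) (Ψ : Matrix (Fin q) (Fin q) ℝ)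
    (h : ∀ v, ((fromCols (Ptheta p q) (Ppsi p q))ᵀ * M * fromCols (Ptheta p q) (Ppsi p q)) *ᵥ v = 0
      → Sum.elim (vec Θ) (vec Ψ) ⬝ᵥ v = 0) :
    trace Θ = trace Ψ := by
  have hnull := h (Sum.elim (vec 1) (vec (-1))) <| by
    rw [← mulVec_mulVec, fromCols_Ptheta_Ppsi_mulVec_sumElim_vec, kronSum_one_neg_one,
      vec_eq_matrix_vec, vec_zero, mulVec_zero]
  simpa only [sumElim_dotProduct_sumElim, vec_eq_matrix_vec, vec_neg, dotProduct_neg,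
    vec_dotProduct_vec_one, add_neg_eq_zero] using hnull

theorem vec_kronSum_dotProduct_self (p q : ℕ) (Θ : Matrix (Fin p) (Fin p) ℝ)
    (Ψ : Matrix (Fin q) (Fin q) ℝ) :
    vec (kronSum Θ Ψ) ⬝ᵥ vec (kronSum Θ Ψ)
      = q * (vec Θ ⬝ᵥ vec Θ) + p * (vec Ψ ⬝ᵥ vec Ψ) + 2 * (trace Θ * trace Ψ) := by
  simp only [vec_eq_matrix_vec, vec_dotProduct_vec, kronSum, transpose_add,
    ← kroneckerMap_transpose, transpose_one, Matrix.add_mul, Matrix.mul_add, ← mul_kronecker_mul,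
    Matrix.one_mul, Matrix.mul_one, trace_add, trace_kronecker, trace_one, Fintype.card_fin,
    trace_transpose]
  ring

theorem min_mul_le_vec_kronSum_dotProduct_self (p q : ℕ) (Θ : Matrix (Fin p) (Fin p) ℝ)
    (Ψ : Matrix (Fin q) (Fin q) ℝ) (h : trace Θ = trace Ψ) :
    ((min p q : ℕ) : ℝ) * (vec Θ ⬝ᵥ vec Θ + vec Ψ ⬝ᵥ vec Ψ)
      ≤ vec (kronSum Θ Ψ) ⬝ᵥ vec (kronSum Θ Ψ) := by
  have hΘ : 0 ≤ vec Θ ⬝ᵥ vec Θ := dotProduct_star_self_nonneg _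
  have hΨ : 0 ≤ vec Ψ ⬝ᵥ vec Ψ := dotProduct_star_self_nonneg _
  have hp : ((min p q : ℕ) : ℝ) ≤ p := Nat.cast_le.2 (min_le_left p q)
  have hq : ((min p q : ℕ) : ℝ) ≤ q := Nat.cast_le.2 (min_le_right p q)
  rw [vec_kronSum_dotProduct_self, h]
  nlinarith [sq_nonneg (trace Ψ)]

theorem vec_kronSum_dotProduct_self_le (p q : ℕ) (Θ : Matrix (Fin p) (Fin p) ℝ)
    (Ψ : Matrix (Fin q) (Fin q) ℝ) :
    vec (kronSum Θ Ψ) ⬝ᵥ vec (kronSum Θ Ψ)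
      ≤ (p + q) * (vec Θ ⬝ᵥ vec Θ + vec Ψ ⬝ᵥ vec Ψ) := by
  have hΘ : trace Θ ^ 2 ≤ p * (vec Θ ⬝ᵥ vec Θ) := by
    simpa [vec_eq_matrix_vec] using sq_trace_le_card_mul Θ
  have hΨ : trace Ψ ^ 2 ≤ q * (vec Ψ ⬝ᵥ vec Ψ) := by
    simpa [vec_eq_matrix_vec] using sq_trace_le_card_mul Ψ
  rw [vec_kronSum_dotProduct_self]
  nlinarith [sq_nonneg (trace Θ - trace Ψ)]

theorem hessian_eigenvalue_bounds_general (p q : ℕ)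
    (W : Matrix (Fin p × Fin q) (Fin p × Fin q) ℝ) (hW : W.PosDef)
    (lmin lmax : ℝ)
    (hmin : IsLeast {μ : ℝ | ∃ v : (Fin p × Fin q) → ℝ, v ≠ 0 ∧ W.mulVec v = μ • v} lmin)
    (hmax : IsGreatest {μ : ℝ | ∃ v : (Fin p × Fin q) → ℝ, v ≠ 0 ∧ W.mulVec v = μ • v} lmax)
    (u : (Fin p × Fin p) ⊕ (Fin q × Fin q) → ℝ)
    (hu : u ⬝ᵥ u = 1)
    (horth : ∀ v : (Fin p × Fin p) ⊕ (Fin q × Fin q) → ℝ,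
      ((fromCols (Ptheta p q) (Ppsi p q))ᵀ * (W ⊗ₖ W)
          * fromCols (Ptheta p q) (Ppsi p q)).mulVec v = 0 → u ⬝ᵥ v = 0) :
    ((min p q : ℕ) : ℝ) * lmin ^ 2
        ≤ u ⬝ᵥ ((fromCols (Ptheta p q) (Ppsi p q))ᵀ * (W ⊗ₖ W)
            * fromCols (Ptheta p q) (Ppsi p q)).mulVec u ∧
      u ⬝ᵥ ((fromCols (Ptheta p q) (Ppsi p q))ᵀ * (W ⊗ₖ W)
            * fromCols (Ptheta p q) (Ppsi p q)).mulVec u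
        ≤ ((p : ℝ) + (q : ℝ)) * lmax ^ 2 := by
  obtain ⟨Θ, Ψ, rfl⟩ : ∃ Θ Ψ, u = Sum.elim (vec Θ) (vec Ψ) :=
    ⟨of fun i j => u (.inl (j, i)), of fun i j => u (.inr (j, i)), by ext (_ | _) <;> rfl⟩
  rw [sumElim_dotProduct_sumElim] at hu
  have htrace : trace Θ = trace Ψ := trace_eq_trace_of_orthogonal_ker p q (W ⊗ₖ W) Θ Ψ horth
  rw [setOf_exists_mulVec_eq_smul_eq_spectrum] at hmin hmax
  have hW₀ : 0 ≤ W := hW.posSemidef.nonneg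
  have hlmin : 0 ≤ lmin := spectrum_nonneg_of_nonneg hW₀ hmin.1
  have hlmax : 0 ≤ lmax := spectrum_nonneg_of_nonneg hW₀ hmax.1
  have hWmin : lmin • 1 ≤ W := smul_one_le_of_forall_le_spectrum hW.isHermitian hmin.2
  have hWmax : W ≤ lmax • 1 := le_smul_one_of_forall_spectrum_le hW.isHermitian hmax.2
  rw [dotProduct_transpose_mul_mul_mulVec, fromCols_Ptheta_Ppsi_mulVec_sumElim_vec, sq, sq]
  set w := vec (kronSum Θ Ψ)
  constructor
  · calc ((min p q : ℕ) : ℝ) * (lmin * lmin)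
        = lmin * lmin * (((min p q : ℕ) : ℝ) * (vec Θ ⬝ᵥ vec Θ + vec Ψ ⬝ᵥ vec Ψ)) := by
          rw [hu]; ring
      _ ≤ lmin * lmin * (w ⬝ᵥ w) := by
          gcongr; exact min_mul_le_vec_kronSum_dotProduct_self p q Θ Ψ htrace
      _ ≤ w ⬝ᵥ (W ⊗ₖ W) *ᵥ w :=
          smul_dotProduct_le_of_smul_one_le (smul_one_le_kronecker hW₀ hlmin hWmin hWmin) w
  · calc w ⬝ᵥ (W ⊗ₖ W) *ᵥ w ≤ lmax * lmax * (w ⬝ᵥ w) :=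
          dotProduct_le_smul_of_le_smul_one (kronecker_le_smul_one hW₀ hlmax hWmax hWmax) w
      _ ≤ lmax * lmax * ((p + q) * (vec Θ ⬝ᵥ vec Θ + vec Ψ ⬝ᵥ vec Ψ)) := by
          gcongr; exact vec_kronSum_dotProduct_self_le p q Θ Ψ
      _ = (p + q) * (lmax * lmax) := by rw [hu]; ring

/-- For `W ≻ 0` with extreme eigenvalues `λ_{W,min}, λ_{W,max}` and
`H = Pᵀ(W⊗W)P`, every unit vector `u` orthogonal to the null space of `H` satisfies
`min{p,q} λ_{W,min}² ≤ uᵀ H u ≤ (p+q) λ_{W,max}²`. -/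
theorem hessian_eigenvalue_bounds (p q : ℕ) (hp : 1 ≤ p) (hq : 1 ≤ q)
    (W : Matrix (Fin p × Fin q) (Fin p × Fin q) ℝ) (hW : W.PosDef)
    (lmin lmax : ℝ)
    (hmin : IsLeast {μ : ℝ | ∃ v : (Fin p × Fin q) → ℝ, v ≠ 0 ∧ W.mulVec v = μ • v} lmin)
    (hmax : IsGreatest {μ : ℝ | ∃ v : (Fin p × Fin q) → ℝ, v ≠ 0 ∧ W.mulVec v = μ • v} lmax)
    (u : (Fin p × Fin p) ⊕ (Fin q × Fin q) → ℝ)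
    (hu : u ⬝ᵥ u = 1)
    (horth : ∀ v : (Fin p × Fin p) ⊕ (Fin q × Fin q) → ℝ,
      ((fromCols (Ptheta p q) (Ppsi p q))ᵀ * (W ⊗ₖ W)
          * fromCols (Ptheta p q) (Ppsi p q)).mulVec v = 0 → u ⬝ᵥ v = 0) :
    ((min p q : ℕ) : ℝ) * lmin ^ 2
        ≤ u ⬝ᵥ ((fromCols (Ptheta p q) (Ppsi p q))ᵀ * (W ⊗ₖ W)
            * fromCols (Ptheta p q) (Ppsi p q)).mulVec u ∧
      u ⬝ᵥ ((fromCols (Ptheta p q) (Ppsi p q))ᵀ * (W ⊗ₖ W)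
            * fromCols (Ptheta p q) (Ppsi p q)).mulVec u
        ≤ ((p : ℝ) + (q : ℝ)) * lmax ^ 2 :=
  hessian_eigenvalue_bounds_general p q W hW lmin lmax hmin hmax u hu horth

end EiGLasso
end

section
/- Let p, q ≥ 1, let Θ be a real symmetric p×p matrix and Ψ a real symmetric q×q matrix, let 0 < λ̲ ≤ λ̄ be reals with λ̲·I_{pq} ⪯ Θ⊕Ψ ⪯ λ̄·I_{pq}, and let ρ ≥ 0 satisfy tr(Ψ) = ρ·tr(Θ). Then the eigenvalues of Θ and Ψ are bounded as follows: (λ̲ − (ρp/(q+ρp))·λ̄)·I_p ⪯ Θ ⪯ (λ̄ − (ρp/(q+ρp))·λ̲)·I_p and (λ̲ − (q/(q+ρp))·λ̄)·I_q ⪯ Ψ ⪯ (λ̄ − (q/(q+ρp))·λ̲)·I_q. -/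
/-
Compressing `λ̲ I ⪯ Θ ⊕ Ψ` by the selections `I_p ⊗ e_i` and summing over `i` (a partial trace)
gives `q λ̲ I ⪯ q Θ + tr(Ψ) I`, i.e. `Θ ⪰ (λ̲ - tr Ψ / q) I`; by the symmetry `Θ ⊕ Ψ ≅ Ψ ⊕ Θ`
also `Ψ ⪰ (λ̲ - tr Θ / p) I`, and the upper bounds are the lower bounds for `-Θ, -Ψ`. Taking
traces gives `pq λ̲ ≤ q tr Θ + p tr Ψ = (q + ρp) tr Θ ≤ pq λ̄`, which pins down `tr Θ / p` and
`tr Ψ / q = ρ tr Θ / q` in terms of `λ̲, λ̄`.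
-/

open Matrix
open scoped Kronecker

namespace EiGLasso

section Loewner

variable {n R : Type*} [DecidableEq n] [CommRing R] [PartialOrder R] [StarRing R]
  [StarOrderedRing R] {A : Matrix n n R} {a b : R}

lemma _root_.Matrix.PosSemidef.sub_smul_one_of_le (hA : (A - a • 1).PosSemidef) (hba : b ≤ a) :
    (A - b • 1).PosSemidef := by
  simpa [sub_smul] using hA.add (PosSemidef.one.smul (sub_nonneg.2 hba))

lemma _root_.Matrix.PosSemidef.smul_one_sub_of_le (hA : (a • 1 - A).PosSemidef) (hab : a ≤ b) :
    (b • 1 - A).PosSemidef := by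
  simpa [sub_smul] using (PosSemidef.one.smul (sub_nonneg.2 hab)).add hA

lemma _root_.Matrix.PosSemidef.mul_card_le_trace [Fintype n] (hA : (A - a • 1).PosSemidef) :
    a * Fintype.card n ≤ A.trace := by
  simpa [trace_sub, sub_nonneg, mul_comm] using hA.trace_nonneg

lemma _root_.Matrix.PosSemidef.trace_le_mul_card [Fintype n] (hA : (a • 1 - A).PosSemidef) :
    A.trace ≤ a * Fintype.card n := by
  simpa [trace_sub, sub_nonneg, mul_comm] using hA.trace_nonneg

end Loewner

variable {p q : ℕ}

lemma kronSum_sub_smul_one (Θ : Matrix (Fin p) (Fin p) ℝ) (Ψ : Matrix (Fin q) (Fin q) ℝ) (c : ℝ) :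
    kronSum Θ Ψ - c • 1 = kronSum Θ (Ψ - c • 1) := by
  conv_lhs => rw [← sub_add_cancel Ψ (c • 1)]
  rw [kronSum, kronSum, kronecker_add, kronecker_smul, one_kronecker_one]
  abel

lemma kronSum_neg (Θ : Matrix (Fin p) (Fin p) ℝ) (Ψ : Matrix (Fin q) (Fin q) ℝ) :
    kronSum (-Θ) (-Ψ) = -kronSum Θ Ψ := by
  ext ⟨i, j⟩ ⟨i', j'⟩
  simp only [kronSum, Matrix.add_apply, kroneckerMap_apply, Matrix.neg_apply, neg_mul, mul_neg,
    neg_add_rev]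
  ring

lemma kronSum_sub_smul_one_submatrix_swap (Θ : Matrix (Fin p) (Fin p) ℝ)
    (Ψ : Matrix (Fin q) (Fin q) ℝ) (c : ℝ) :
    (kronSum Θ Ψ - c • 1).submatrix Prod.swap Prod.swap = kronSum Ψ Θ - c • 1 := by
  ext ⟨i, j⟩ ⟨i', j'⟩
  simp only [kronSum, submatrix_apply, Prod.swap_prod_mk, Matrix.sub_apply, Matrix.add_apply,
    kroneckerMap_apply, one_apply, mul_ite, mul_one, mul_zero, ite_mul, one_mul, zero_mul,
    Matrix.smul_apply, Prod.mk.injEq, smul_eq_mul, and_comm, sub_left_inj]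
  ring

lemma selTheta_transpose_mul_kronecker_mul_selTheta (A : Matrix (Fin p) (Fin p) ℝ)
    (B : Matrix (Fin q) (Fin q) ℝ) (i : Fin q) :
    (selTheta p q i)ᵀ * (A ⊗ₖ B) * selTheta p q i = B i i • A := by
  ext j j'
  simp [selTheta, mul_apply, mul_comm]

def partialTrace₂ (M : Matrix (Fin p × Fin q) (Fin p × Fin q) ℝ) : Matrix (Fin p) (Fin p) ℝ :=
  ∑ i, (selTheta p q i)ᵀ * M * selTheta p q i

lemma posSemidef_partialTrace₂ {M : Matrix (Fin p × Fin q) (Fin p × Fin q) ℝ}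
    (hM : M.PosSemidef) : (partialTrace₂ M).PosSemidef :=
  posSemidef_sum _ fun i _ => by
    simpa using hM.conjTranspose_mul_mul_same (selTheta p q i)

lemma partialTrace₂_kronSum (Θ : Matrix (Fin p) (Fin p) ℝ) (Ψ : Matrix (Fin q) (Fin q) ℝ) :
    partialTrace₂ (kronSum Θ Ψ) = (q : ℝ) • Θ + Ψ.trace • 1 := by
  simp [partialTrace₂, kronSum, Matrix.mul_add, Matrix.add_mul, Finset.sum_add_distrib,
    selTheta_transpose_mul_kronecker_mul_selTheta, trace, ← Finset.sum_smul,
    ← Nat.cast_smul_eq_nsmul ℝ, -nsmul_eq_mul]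

lemma posSemidef_left_sub_of_kronSum_sub (hq : 0 < q) {Θ : Matrix (Fin p) (Fin p) ℝ}
    {Ψ : Matrix (Fin q) (Fin q) ℝ} {c : ℝ} (h : (kronSum Θ Ψ - c • 1).PosSemidef) :
    (Θ - (c - Ψ.trace / q) • 1).PosSemidef := by
  have h₂ := (posSemidef_partialTrace₂ h).smul (by positivity : (0 : ℝ) ≤ (q : ℝ)⁻¹)
  rw [kronSum_sub_smul_one, partialTrace₂_kronSum] at h₂
  convert h₂ using 1
  have hq' : (q : ℝ) ≠ 0 := by positivity
  simp only [trace_sub, trace_smul, trace_one, Fintype.card_fin, smul_eq_mul]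
  match_scalars <;> field_simp
  ring

lemma posSemidef_right_sub_of_kronSum_sub (hp : 0 < p) {Θ : Matrix (Fin p) (Fin p) ℝ}
    {Ψ : Matrix (Fin q) (Fin q) ℝ} {c : ℝ} (h : (kronSum Θ Ψ - c • 1).PosSemidef) :
    (Ψ - (c - Θ.trace / p) • 1).PosSemidef := by
  refine posSemidef_left_sub_of_kronSum_sub hp ?_
  simpa only [kronSum_sub_smul_one_submatrix_swap] using h.submatrix Prod.swap

lemma posSemidef_sub_left_of_sub_kronSum (hq : 0 < q) {Θ : Matrix (Fin p) (Fin p) ℝ}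
    {Ψ : Matrix (Fin q) (Fin q) ℝ} {c : ℝ} (h : (c • 1 - kronSum Θ Ψ).PosSemidef) :
    ((c - Ψ.trace / q) • 1 - Θ).PosSemidef := by
  have h₂ := posSemidef_left_sub_of_kronSum_sub hq (Θ := -Θ) (Ψ := -Ψ) (c := -c)
    (by rwa [kronSum_neg, neg_smul, sub_neg_eq_add, neg_add_eq_sub])
  convert h₂ using 1
  simp only [trace_neg, neg_div, sub_neg_eq_add]
  module

lemma posSemidef_sub_right_of_sub_kronSum (hp : 0 < p) {Θ : Matrix (Fin p) (Fin p) ℝ}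
    {Ψ : Matrix (Fin q) (Fin q) ℝ} {c : ℝ} (h : (c • 1 - kronSum Θ Ψ).PosSemidef) :
    ((c - Θ.trace / p) • 1 - Ψ).PosSemidef := by
  have h₂ := posSemidef_right_sub_of_kronSum_sub hp (Θ := -Θ) (Ψ := -Ψ) (c := -c)
    (by rwa [kronSum_neg, neg_smul, sub_neg_eq_add, neg_add_eq_sub])
  convert h₂ using 1
  simp only [trace_neg, neg_div, sub_neg_eq_add]
  module

lemma mul_le_trace_of_kronSum_sub (hq : 0 < q) {Θ : Matrix (Fin p) (Fin p) ℝ}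
    {Ψ : Matrix (Fin q) (Fin q) ℝ} {c : ℝ} (h : (kronSum Θ Ψ - c • 1).PosSemidef) :
    p * q * c ≤ q * Θ.trace + p * Ψ.trace := by
  have h₂ := (posSemidef_left_sub_of_kronSum_sub hq h).mul_card_le_trace
  rw [Fintype.card_fin] at h₂
  field_simp at h₂
  linarith

lemma trace_le_of_sub_kronSum (hq : 0 < q) {Θ : Matrix (Fin p) (Fin p) ℝ}
    {Ψ : Matrix (Fin q) (Fin q) ℝ} {c : ℝ} (h : (c • 1 - kronSum Θ Ψ).PosSemidef) :
    q * Θ.trace + p * Ψ.trace ≤ p * q * c := by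
  have h₂ := (posSemidef_sub_left_of_sub_kronSum hq h).trace_le_mul_card
  rw [Fintype.card_fin] at h₂
  field_simp at h₂
  linarith

theorem eigenvalue_bounds_trace_ratio_general (p q : ℕ) (hp : 1 ≤ p) (hq : 1 ≤ q)
    (Θ : Matrix (Fin p) (Fin p) ℝ) (Ψ : Matrix (Fin q) (Fin q) ℝ)
    (llo lhi : ℝ)
    (hlow : (kronSum Θ Ψ - llo • (1 : Matrix (Fin p × Fin q) (Fin p × Fin q) ℝ)).PosSemidef)
    (hhigh : (lhi • (1 : Matrix (Fin p × Fin q) (Fin p × Fin q) ℝ) - kronSum Θ Ψ).PosSemidef)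
    (ρ : ℝ) (hρ : 0 ≤ ρ) (htr : Ψ.trace = ρ * Θ.trace) :
    (Θ - (llo - (ρ * (p : ℝ) / ((q : ℝ) + ρ * (p : ℝ))) * lhi)
        • (1 : Matrix (Fin p) (Fin p) ℝ)).PosSemidef ∧
    ((lhi - (ρ * (p : ℝ) / ((q : ℝ) + ρ * (p : ℝ))) * llo)
        • (1 : Matrix (Fin p) (Fin p) ℝ) - Θ).PosSemidef ∧
    (Ψ - (llo - ((q : ℝ) / ((q : ℝ) + ρ * (p : ℝ))) * lhi)
        • (1 : Matrix (Fin q) (Fin q) ℝ)).PosSemidef ∧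
    ((lhi - ((q : ℝ) / ((q : ℝ) + ρ * (p : ℝ))) * llo)
        • (1 : Matrix (Fin q) (Fin q) ℝ) - Ψ).PosSemidef := by
  have hp' : (0 : ℝ) < p := by exact_mod_cast hp
  have hq' : (0 : ℝ) < q := by exact_mod_cast hq
  have hD : (0 : ℝ) < q + ρ * p := by positivity
  have htr_lo := mul_le_trace_of_kronSum_sub hq hlow
  have htr_hi := trace_le_of_sub_kronSum hq hhigh
  rw [htr] at htr_lo htr_hi
  refine ⟨(posSemidef_left_sub_of_kronSum_sub hq hlow).sub_smul_one_of_le ?_,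
    (posSemidef_sub_left_of_sub_kronSum hq hhigh).smul_one_sub_of_le ?_,
    (posSemidef_right_sub_of_kronSum_sub hp hlow).sub_smul_one_of_le ?_,
    (posSemidef_sub_right_of_sub_kronSum hp hhigh).smul_one_sub_of_le ?_⟩
  · rw [htr, sub_le_sub_iff_left, div_mul_eq_mul_div, div_le_div_iff₀ hq' hD]
    linarith [mul_le_mul_of_nonneg_left htr_hi hρ]
  · rw [htr, sub_le_sub_iff_left, div_mul_eq_mul_div, div_le_div_iff₀ hD hq']
    linarith [mul_le_mul_of_nonneg_left htr_lo hρ]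
  · rw [sub_le_sub_iff_left, div_mul_eq_mul_div, div_le_div_iff₀ hp' hD]
    linarith
  · rw [sub_le_sub_iff_left, div_mul_eq_mul_div, div_le_div_iff₀ hD hp']
    linarith

/-- If `λ̲ I ⪯ Θ⊕Ψ ⪯ λ̄ I` with `0 < λ̲ ≤ λ̄` and `tr(Ψ) = ρ tr(Θ)`
with `ρ ≥ 0`, then
`(λ̲ − (ρp/(q+ρp)) λ̄) I ⪯ Θ ⪯ (λ̄ − (ρp/(q+ρp)) λ̲) I` and
`(λ̲ − (q/(q+ρp)) λ̄) I ⪯ Ψ ⪯ (λ̄ − (q/(q+ρp)) λ̲) I`. -/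
theorem eigenvalue_bounds_trace_ratio (p q : ℕ) (hp : 1 ≤ p) (hq : 1 ≤ q)
    (Θ : Matrix (Fin p) (Fin p) ℝ) (Ψ : Matrix (Fin q) (Fin q) ℝ)
    (hΘ : Θ.IsSymm) (hΨ : Ψ.IsSymm)
    (llo lhi : ℝ) (h0 : 0 < llo) (hle : llo ≤ lhi)
    (hlow : (kronSum Θ Ψ - llo • (1 : Matrix (Fin p × Fin q) (Fin p × Fin q) ℝ)).PosSemidef)
    (hhigh : (lhi • (1 : Matrix (Fin p × Fin q) (Fin p × Fin q) ℝ) - kronSum Θ Ψ).PosSemidef)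
    (ρ : ℝ) (hρ : 0 ≤ ρ) (htr : Ψ.trace = ρ * Θ.trace) :
    (Θ - (llo - (ρ * (p : ℝ) / ((q : ℝ) + ρ * (p : ℝ))) * lhi)
        • (1 : Matrix (Fin p) (Fin p) ℝ)).PosSemidef ∧
    ((lhi - (ρ * (p : ℝ) / ((q : ℝ) + ρ * (p : ℝ))) * llo)
        • (1 : Matrix (Fin p) (Fin p) ℝ) - Θ).PosSemidef ∧
    (Ψ - (llo - ((q : ℝ) / ((q : ℝ) + ρ * (p : ℝ))) * lhi)
        • (1 : Matrix (Fin q) (Fin q) ℝ)).PosSemidef ∧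
    ((lhi - ((q : ℝ) / ((q : ℝ) + ρ * (p : ℝ))) * llo)
        • (1 : Matrix (Fin q) (Fin q) ℝ) - Ψ).PosSemidef :=
  eigenvalue_bounds_trace_ratio_general p q hp hq Θ Ψ llo lhi hlow hhigh ρ hρ htr

end EiGLasso
end
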